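/- arXiv:2205.06001 — 9 statements merged into one kernel-verified Lean document; each statement's English description precedes it below -/
import Mathlib

section
/- For all x ≥ 0, the function R(x) = Er(x) − x·f₁(x) satisfies R(x) = −∫₀ˣ f₁(t) dt. -/
open Filter MeasureTheory Set intervalIntegral


lemma fract_ii (c a b : ℝ) : IntervalIntegrable (fun t => Int.fract (t/c)) volume a b := by
  rw [intervalIntegrable_iff]
  apply Measure.integrableOn_of_bounded (measure_Ioc_lt_top.ne)
    ((measurable_fract.comp (measurable_id.div_const c)).aestronglyMeasurable)
  filter_upwards with t
  rw [Real.norm_eq_abs, abs_of_nonneg (Int.fract_nonneg _)]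
  exact (Int.fract_lt_one _).le

lemma fract_unit (y : ℝ) : ∫ t in y..(y+1), Int.fract t = 1/2 := by
  have := (Int.fract_periodic ℝ).intervalIntegral_add_eq y 0
  rw [this, zero_add]
  have hcongr : ∀ᵐ t : ℝ, t ∈ Set.uIoc (0:ℝ) 1 → Int.fract t = t := by
    have h1 : (volume : Measure ℝ) {(1:ℝ)} = 0 := measure_singleton 1
    rw [ae_iff]
    apply measure_mono_null _ h1
    intro t ht
    simp only [mem_setOf_eq, not_forall] at ht
    obtain ⟨ht1, ht2⟩ := ht
    rw [uIoc_of_le zero_le_one] at ht1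
    rcases lt_or_eq_of_le ht1.2 with h | h
    · exact absurd (Int.fract_eq_self.2 ⟨ht1.1.le, h⟩) ht2
    · exact h
  rw [integral_congr_ae hcongr, integral_id]
  norm_num

lemma fract_integral : ∀ (n : ℕ) (x : ℝ), 0 ≤ x → ⌊x⌋₊ = n →
    ∫ t in (0:ℝ)..x, Int.fract t = (n : ℝ)/2 + Int.fract x ^ 2 / 2 := by
  intro n
  induction n with
  | zero =>
    intro x hx hfl
    have hx1 : x < 1 := by
      by_contra h
      push_neg at h
      have := Nat.floor_le_floor h
      simp [hfl, Nat.floor_one] at this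
    have heq : EqOn (fun t => Int.fract t) (fun t : ℝ => t) (uIcc 0 x) := by
      intro t ht
      rw [uIcc_of_le hx] at ht
      exact Int.fract_eq_self.2 ⟨ht.1, ht.2.trans_lt hx1⟩
    rw [integral_congr heq, integral_id, Int.fract_eq_self.2 ⟨hx, hx1⟩]
    norm_num
  | succ n ih =>
    intro x hx hfl
    have hx1 : 1 ≤ x := by
      by_contra h
      push_neg at h
      rw [Nat.floor_eq_zero.2 h] at hfl
      exact Nat.succ_ne_zero n hfl.symm
    have hy : 0 ≤ x - 1 := by linarith
    have hyfl : ⌊x - 1⌋₊ = n := by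
      have h1 : (n+1 : ℕ) ≤ x := by
        rw [← hfl]; exact Nat.floor_le hx
      have h2 : x < (n+1 : ℕ) + 1 := by
        rw [← hfl]; exact Nat.lt_floor_add_one x
      rw [Nat.floor_eq_iff hy]
      push_cast at h1 h2 ⊢
      constructor <;> linarith
    have hfr : Int.fract (x - 1) = Int.fract x := by
      simpa using Int.fract_sub_intCast x 1
    have hsplit := integral_add_adjacent_intervals (a := (0:ℝ)) (b := x-1) (c := x)
      (f := fun t => Int.fract t) (by simpa using fract_ii 1 0 (x-1)) (by simpa using fract_ii 1 (x-1) x)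
    have hunit : ∫ t in (x-1)..x, Int.fract t = 1/2 := by
      have := fract_unit (x-1)
      rwa [sub_add_cancel] at this
    rw [← hsplit, ih (x-1) hy hyfl, hunit, hfr]
    push_cast
    ring

lemma fract_div_integral (c : ℝ) (hc : 0 < c) (x : ℝ) (hx : 0 ≤ x) :
    ∫ t in (0:ℝ)..x, Int.fract (t/c)
      = c * ((⌊x/c⌋₊ : ℝ)/2 + Int.fract (x/c) ^ 2 / 2) := by
  have h := inv_mul_integral_comp_div (f := fun t => Int.fract t) (c := c) (a := 0) (b := x)
  have hxc : (0:ℝ)/c = 0 := zero_div c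
  rw [hxc] at h
  have h2 := fract_integral ⌊x/c⌋₊ (x/c) (div_nonneg hx hc.le) rfl
  rw [h2] at h
  rw [← h, ← mul_assoc, mul_inv_cancel₀ hc.ne', one_mul]

lemma gauss (k : ℕ) : (∑ m ∈ Finset.Icc 1 k, (m:ℂ)) = k*(k+1)/2 := by
  induction k with
  | zero => simp
  | succ k ih =>
    rw [Finset.sum_Icc_succ_top (Nat.one_le_iff_ne_zero.2 (Nat.succ_ne_zero k)), ih]
    push_cast
    ring

lemma swap_sum (a : ℕ → ℂ) (M : ℕ) :
    ∑ n ∈ Finset.Icc 1 M, ∑ d ∈ n.divisors, a d * ((n / d : ℕ) : ℂ)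
    = ∑ d ∈ Finset.Icc 1 M, a d * ∑ m ∈ Finset.Icc 1 (M / d), (m : ℂ) := by
  simp_rw [Finset.mul_sum]
  rw [Finset.sum_sigma', Finset.sum_sigma']
  apply Finset.sum_nbij' (i := fun p => ⟨p.2, p.1 / p.2⟩) (j := fun q => ⟨q.1 * q.2, q.1⟩)
  · rintro ⟨n, d⟩ hp
    simp only [Finset.mem_sigma, Finset.mem_Icc, Nat.mem_divisors] at hp ⊢
    obtain ⟨⟨hn1, hnM⟩, hdn, hn0⟩ := hp
    have hd0 : 0 < d := Nat.pos_of_dvd_of_pos hdn (Nat.pos_of_ne_zero hn0)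
    exact ⟨⟨hd0, (Nat.le_of_dvd (Nat.pos_of_ne_zero hn0) hdn).trans hnM⟩,
      Nat.one_le_div_iff hd0 |>.2 (Nat.le_of_dvd (Nat.pos_of_ne_zero hn0) hdn),
      Nat.div_le_div_right hnM⟩
  · rintro ⟨d, m⟩ hq
    simp only [Finset.mem_sigma, Finset.mem_Icc, Nat.mem_divisors] at hq ⊢
    obtain ⟨⟨hd1, hdM⟩, hm1, hmMd⟩ := hq
    have hd0 : 0 < d := hd1
    have hne : d * m ≠ 0 := Nat.mul_ne_zero (by omega) (by omega)
    refine ⟨⟨Nat.one_le_iff_ne_zero.2 hne, ?_⟩, ⟨m, rfl⟩, hne⟩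
    rw [mul_comm]
    exact (Nat.le_div_iff_mul_le hd0).1 hmMd
  · rintro ⟨n, d⟩ hp
    simp only [Finset.mem_sigma, Finset.mem_Icc, Nat.mem_divisors] at hp
    obtain ⟨_, hdn, hn0⟩ := hp
    simp [Nat.mul_div_cancel' hdn]
  · rintro ⟨d, m⟩ hq
    simp only [Finset.mem_sigma, Finset.mem_Icc] at hq
    simp [Nat.mul_div_cancel_left _ (Nat.lt_of_lt_of_le Nat.zero_lt_one hq.1.1)]
  · rintro ⟨n, d⟩ hp
    simp only [Finset.mem_sigma, Finset.mem_Icc, Nat.mem_divisors] at hp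
    rfl

lemma fract_ii' (c a b : ℝ) :
    IntervalIntegrable (fun t => ((Int.fract (t/c) : ℝ) : ℂ)) volume a b := by
  have h := fract_ii c a b
  rw [intervalIntegrable_iff] at h ⊢
  exact h.ofReal

lemma stepA
    (a : ℕ → ℂ) (α : ℂ)
    (ha : Tendsto (fun N : ℕ => ∑ n ∈ Finset.Icc 1 N, a n / (n : ℂ) ^ 2)
      atTop (nhds (2 * α)))
    (f₁ : ℝ → ℂ)
    (hf₁ : ∀ x : ℝ, 0 ≤ x →
      Tendsto (fun N : ℕ => -∑ n ∈ Finset.Icc 1 N,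
          a n / (n : ℂ) * ((Int.fract (x / (n : ℝ)) : ℝ) : ℂ))
        atTop (nhds (f₁ x)))
    (x : ℝ) (hx : 0 ≤ x) (t : ℝ) (ht0 : 0 ≤ t) (htx : t ≤ x) :
    f₁ t = (-∑ n ∈ Finset.Icc 1 ⌊x⌋₊, a n / (n:ℂ) * ((Int.fract (t/(n:ℝ)) : ℝ) : ℂ))
      - (t:ℂ) * (2*α - ∑ n ∈ Finset.Icc 1 ⌊x⌋₊, a n / (n : ℂ)^2) := by
  set N := ⌊x⌋₊ with hN
  set P : ℕ → ℂ := fun M => ∑ n ∈ Finset.Icc 1 M, a n / (n:ℂ)^2 with hP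
  set S : ℂ := -∑ n ∈ Finset.Icc 1 N, a n / (n:ℂ) * ((Int.fract (t/(n:ℝ)) : ℝ) : ℂ) with hS
  have hlim2 : Tendsto (fun M : ℕ => S - (t:ℂ) * (P M - P N)) atTop
      (nhds (S - (t:ℂ) * (2*α - P N))) :=
    tendsto_const_nhds.sub (tendsto_const_nhds.mul (ha.sub tendsto_const_nhds))
  have hEq : ∀ᶠ M in atTop, S - (t:ℂ) * (P M - P N)
      = -∑ n ∈ Finset.Icc 1 M, a n / (n:ℂ) * ((Int.fract (t/(n:ℝ)) : ℝ) : ℂ) := by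
    filter_upwards [eventually_ge_atTop N] with M hM
    have hsplit : ∑ n ∈ Finset.Icc 1 M, a n / (n:ℂ) * ((Int.fract (t/(n:ℝ)) : ℝ) : ℂ)
        = (∑ n ∈ Finset.Icc 1 N, a n / (n:ℂ) * ((Int.fract (t/(n:ℝ)) : ℝ) : ℂ))
          + ∑ n ∈ Finset.Ioc N M, a n / (n:ℂ) * ((Int.fract (t/(n:ℝ)) : ℝ) : ℂ) := by
      rw [show Finset.Icc 1 M = Finset.Ioc 0 M from Finset.Icc_add_one_left_eq_Ioc 0 M,
        show Finset.Icc 1 N = Finset.Ioc 0 N from Finset.Icc_add_one_left_eq_Ioc 0 N,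
        ← Finset.sum_Ioc_consecutive _ (Nat.zero_le N) hM]
    have htail : ∑ n ∈ Finset.Ioc N M, a n / (n:ℂ) * ((Int.fract (t/(n:ℝ)) : ℝ) : ℂ)
        = (t:ℂ) * (P M - P N) := by
      have hPdiff : P M - P N = ∑ n ∈ Finset.Ioc N M, a n / (n:ℂ)^2 := by
        rw [hP]
        simp only
        rw [show Finset.Icc 1 M = Finset.Ioc 0 M from Finset.Icc_add_one_left_eq_Ioc 0 M,
          show Finset.Icc 1 N = Finset.Ioc 0 N from Finset.Icc_add_one_left_eq_Ioc 0 N,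
          ← Finset.sum_Ioc_consecutive _ (Nat.zero_le N) hM]
        ring
      rw [hPdiff, Finset.mul_sum]
      apply Finset.sum_congr rfl
      intro n hn
      rw [Finset.mem_Ioc] at hn
      have hn0 : 0 < n := lt_of_le_of_lt (Nat.zero_le N) hn.1
      have htn : t / (n:ℝ) < 1 := by
        rw [div_lt_one (by exact_mod_cast hn0)]
        calc t ≤ x := htx
          _ < N + 1 := Nat.lt_floor_add_one x
          _ ≤ n := by exact_mod_cast hn.1
      rw [Int.fract_eq_self.2 ⟨div_nonneg ht0 (by positivity), htn⟩]
      have hnne : (n:ℂ) ≠ 0 := by exact_mod_cast hn0.ne'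
      push_cast
      field_simp
    rw [hsplit, htail, hS]
    ring
  exact tendsto_nhds_unique (hf₁ t ht0) (hlim2.congr' hEq)

theorem stmt_2
    (a : ℕ → ℂ) (α : ℂ)
    (ha : Tendsto (fun N : ℕ => ∑ n ∈ Finset.Icc 1 N, a n / (n : ℂ) ^ 2)
      atTop (nhds (2 * α)))
    (b : ℕ → ℂ)
    (hb : ∀ n : ℕ, 0 < n → b n = ∑ d ∈ n.divisors, a d * ((n / d : ℕ) : ℂ))
    (Er : ℝ → ℂ)
    (hEr : ∀ x : ℝ, 0 ≤ x →
      Er x = (∑ n ∈ Finset.Icc 1 ⌊x⌋₊, b n) - α * (x : ℂ) ^ 2)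
    (f₁ : ℝ → ℂ)
    (hf₁ : ∀ x : ℝ, 0 ≤ x →
      Tendsto (fun N : ℕ => -∑ n ∈ Finset.Icc 1 N,
          a n / (n : ℂ) * ((Int.fract (x / (n : ℝ)) : ℝ) : ℂ))
        atTop (nhds (f₁ x)))
    (R : ℝ → ℂ)
    (hR : ∀ x : ℝ, 0 ≤ x → R x = Er x - (x : ℂ) * f₁ x) :
    ∀ x : ℝ, 0 ≤ x → R x = -∫ t in (0:ℝ)..x, f₁ t := by
  intro x hx
  have hA := fun t ht0 htx => stepA a α ha f₁ hf₁ x hx t ht0 htx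
  set N := ⌊x⌋₊ with hN
  set τ : ℂ := 2*α - ∑ n ∈ Finset.Icc 1 N, a n / (n : ℂ)^2 with hτ
  -- integrability facts
  have hint1 : ∀ n ∈ Finset.Icc 1 N, IntervalIntegrable
      (fun t => a n / (n:ℂ) * ((Int.fract (t/(n:ℝ)) : ℝ) : ℂ)) volume 0 x :=
    fun n _ => (fract_ii' (n:ℝ) 0 x).const_mul _
  have hint2 : IntervalIntegrable (fun t : ℝ => (t:ℂ) * τ) volume 0 x :=
    ((Complex.continuous_ofReal.mul continuous_const)).intervalIntegrable 0 x
  -- compute the integral of f₁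
  have hInt : ∫ t in (0:ℝ)..x, f₁ t
      = (-∑ n ∈ Finset.Icc 1 N,
          a n / (n:ℂ) * (((n:ℝ) * ((⌊x/(n:ℝ)⌋₊ : ℝ)/2 + Int.fract (x/(n:ℝ)) ^ 2 / 2) : ℝ) : ℂ))
        - ((x^2/2 : ℝ) : ℂ) * τ := by
    have hcongr : EqOn f₁ (fun t =>
        (-∑ n ∈ Finset.Icc 1 N, a n / (n:ℂ) * ((Int.fract (t/(n:ℝ)) : ℝ) : ℂ)) - (t:ℂ) * τ)
        (uIcc 0 x) := by
      intro t ht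
      rw [uIcc_of_le hx] at ht
      exact hA t ht.1 ht.2
    rw [integral_congr hcongr]
    have hintS : IntervalIntegrable (fun t => ∑ n ∈ Finset.Icc 1 N,
        a n / (n:ℂ) * ((Int.fract (t/(n:ℝ)) : ℝ) : ℂ)) volume 0 x := by
      have h := IntervalIntegrable.sum (μ := volume) (a := (0:ℝ)) (b := x) (Finset.Icc 1 N) hint1
      have heq : (fun t : ℝ => ∑ n ∈ Finset.Icc 1 N,
          a n / (n:ℂ) * ((Int.fract (t/(n:ℝ)) : ℝ) : ℂ))
          = ∑ n ∈ Finset.Icc 1 N, (fun t : ℝ => a n / (n:ℂ) * ((Int.fract (t/(n:ℝ)) : ℝ) : ℂ)) := by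
        funext t
        simp [Finset.sum_apply]
      rw [heq]
      exact h
    have hintS' : IntervalIntegrable (fun t : ℝ => -∑ n ∈ Finset.Icc 1 N,
        a n / (n:ℂ) * ((Int.fract (t/(n:ℝ)) : ℝ) : ℂ)) volume 0 x := by
      exact hintS.neg
    rw [integral_sub hintS' hint2]
    rw [intervalIntegral.integral_neg, intervalIntegral.integral_finset_sum hint1]
    have h1 : ∀ n ∈ Finset.Icc 1 N,
        ∫ t in (0:ℝ)..x, a n / (n:ℂ) * ((Int.fract (t/(n:ℝ)) : ℝ) : ℂ)
        = a n / (n:ℂ) * (((n:ℝ) * ((⌊x/(n:ℝ)⌋₊ : ℝ)/2 + Int.fract (x/(n:ℝ)) ^ 2 / 2) : ℝ) : ℂ) := by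
      intro n hn
      rw [Finset.mem_Icc] at hn
      have hn0 : (0:ℝ) < (n:ℝ) := by exact_mod_cast hn.1
      rw [intervalIntegral.integral_const_mul, integral_ofReal, fract_div_integral (n:ℝ) hn0 x hx]
    rw [Finset.sum_congr rfl h1]
    have h2 : ∫ t in (0:ℝ)..x, (t:ℂ) * τ = ((x^2/2 : ℝ) : ℂ) * τ := by
      rw [intervalIntegral.integral_mul_const]
      congr 1
      rw [show (fun t : ℝ => (t:ℂ)) = (fun t : ℝ => ((id t : ℝ) : ℂ)) from rfl,
        integral_ofReal]
      norm_num [integral_id]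
    rw [h2]
  -- compute R x
  have hRx : R x = (∑ n ∈ Finset.Icc 1 N, a n * (((N/n : ℕ):ℂ) * (((N/n : ℕ):ℂ)+1)/2))
      - α * (x:ℂ)^2
      + (x:ℂ) * (∑ n ∈ Finset.Icc 1 N, a n / (n:ℂ) * ((Int.fract (x/(n:ℝ)) : ℝ) : ℂ))
      + (x:ℂ)^2 * τ := by
    rw [hR x hx, hEr x hx, hA x hx le_rfl]
    have hbsum : ∑ n ∈ Finset.Icc 1 N, b n
        = ∑ n ∈ Finset.Icc 1 N, a n * (((N/n : ℕ):ℂ) * (((N/n : ℕ):ℂ)+1)/2) := by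
      rw [Finset.sum_congr rfl (fun n hn => hb n (by
        rw [Finset.mem_Icc] at hn; omega)), swap_sum]
      refine Finset.sum_congr rfl (fun d _ => ?_)
      rw [gauss]
    rw [hbsum]
    ring
  -- put it together
  rw [hRx, hInt]
  have hα : α * (x:ℂ)^2 = (x:ℂ)^2/2 * (∑ n ∈ Finset.Icc 1 N, a n / (n : ℂ)^2)
      + (x:ℂ)^2/2 * τ := by
    rw [hτ]; ring
  have hkey : ∀ n ∈ Finset.Icc 1 N,
      a n * (((N/n : ℕ):ℂ) * (((N/n : ℕ):ℂ)+1)/2)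
      + (x:ℂ) * (a n / (n:ℂ) * ((Int.fract (x/(n:ℝ)) : ℝ) : ℂ))
      - (x:ℂ)^2/2 * (a n / (n : ℂ)^2)
      = a n / (n:ℂ) * (((n:ℝ) * ((⌊x/(n:ℝ)⌋₊ : ℝ)/2 + Int.fract (x/(n:ℝ)) ^ 2 / 2) : ℝ) : ℂ) := by
    intro n hn
    rw [Finset.mem_Icc] at hn
    have hn0 : (0:ℝ) < (n:ℝ) := by exact_mod_cast hn.1
    have hfl : ⌊x/(n:ℝ)⌋₊ = N / n := by rw [hN, Nat.floor_div_natCast]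
    have hxeq : (x:ℝ) = (n:ℝ) * (((N/n : ℕ):ℝ) + Int.fract (x/(n:ℝ))) := by
      have h1 : ((⌊x/(n:ℝ)⌋₊ : ℝ)) = (⌊x/(n:ℝ)⌋ : ℝ) :=
        natCast_floor_eq_intCast_floor (div_nonneg hx hn0.le)
      have h2 := Int.floor_add_fract (x/(n:ℝ))
      rw [hfl] at h1
      have h3 : ((N/n : ℕ):ℝ) + Int.fract (x/(n:ℝ)) = x/(n:ℝ) := by
        rw [h1]; exact h2
      rw [h3, mul_div_cancel₀ _ hn0.ne']
    have hxeqC : (x:ℂ) = (n:ℂ) * (((N/n : ℕ):ℂ) + ((Int.fract (x/(n:ℝ)) : ℝ) : ℂ)) := by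
      exact_mod_cast congrArg Complex.ofReal hxeq
    have hnC : (n:ℂ) ≠ 0 := by exact_mod_cast hn0.ne'
    rw [hfl]
    push_cast
    rw [hxeqC]
    field_simp
    ring
  have hsum : (∑ n ∈ Finset.Icc 1 N, a n * (((N/n : ℕ):ℂ) * (((N/n : ℕ):ℂ)+1)/2))
      + (x:ℂ) * (∑ n ∈ Finset.Icc 1 N, a n / (n:ℂ) * ((Int.fract (x/(n:ℝ)) : ℝ) : ℂ))
      - (x:ℂ)^2/2 * (∑ n ∈ Finset.Icc 1 N, a n / (n : ℂ)^2)
      = ∑ n ∈ Finset.Icc 1 N,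
          a n / (n:ℂ) * (((n:ℝ) * ((⌊x/(n:ℝ)⌋₊ : ℝ)/2 + Int.fract (x/(n:ℝ)) ^ 2 / 2) : ℝ) : ℂ) := by
    rw [Finset.mul_sum, Finset.mul_sum, ← Finset.sum_add_distrib, ← Finset.sum_sub_distrib]
    exact Finset.sum_congr rfl hkey
  have hXR : ((x^2/2 : ℝ) : ℂ) = (x:ℂ)^2/2 := by push_cast; ring
  rw [hα, hXR]
  linear_combination hsum
end

section
/- The function R(x) = Er(x) − x·f₁(x) is continuous on [0,∞). -/
/-!
For `d > x` one has `{x/d} = x/d`, so the tail of the series defining `f₁(x)` is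
`-x · Σ_{d>x} a(d)/d² = -x · (2α - Σ_{d≤x} a(d)/d²)`. Combined with
`Σ_{n≤x} b(n) = Σ_{d≤x} a(d) Σ_{e≤x/d} e`, this gives
`R(x) = α x² + Σ_{d≤x} a(d) g(x/d)`, where `g(t) = Σ_{m≤t} m - t² + t{t}` is `triangularError`.
Since `g` is continuous and vanishes on `[0, 1)`, on `[0, M)` the sum may be taken over all
`d ≤ M`, which makes `R` a finite sum of continuous functions there.
-/

open Filter Finset Topology

noncomputable def triangularError (t : ℝ) : ℝ :=
  (Int.fract t ^ 2 - Int.fract t + t - t ^ 2) / 2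

@[fun_prop]
theorem continuous_triangularError : Continuous triangularError := by
  have hfract : Continuous fun t : ℝ => Int.fract t ^ 2 - Int.fract t :=
    ContinuousOn.comp_fract'' (f := fun y : ℝ => y ^ 2 - y) (by fun_prop) (by norm_num)
  unfold triangularError
  fun_prop

theorem triangularError_eq_zero {t : ℝ} (h0 : 0 ≤ t) (h1 : t < 1) : triangularError t = 0 := by
  rw [triangularError, Int.fract_eq_self.mpr ⟨h0, h1⟩]
  ring

theorem sum_Icc_natCast_mul_two {R : Type*} [CommSemiring R] (n : ℕ) :
    (∑ m ∈ Icc 1 n, (m : R)) * 2 = n * (n + 1) := by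
  induction n with
  | zero => simp
  | succ n ih =>
    rw [sum_Icc_succ_top (by omega), add_mul, ih]
    push_cast
    ring

theorem sum_Icc_floor_natCast {t : ℝ} (ht : 0 ≤ t) :
    ∑ m ∈ Icc 1 ⌊t⌋₊, (m : ℂ) = triangularError t - t * (Int.fract t : ℝ) + t ^ 2 := by
  have hfract : Int.fract t = t - ⌊t⌋₊ := by
    rw [Int.fract, ← natCast_floor_eq_intCast_floor ht]
  rw [triangularError, hfract]
  push_cast
  linear_combination sum_Icc_natCast_mul_two (R := ℂ) ⌊t⌋₊ / 2

theorem sum_Icc_sum_divisors_mul {R : Type*} [CommSemiring R] (a c : ℕ → R) (N : ℕ) :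
    ∑ n ∈ Icc 1 N, ∑ d ∈ n.divisors, a d * c (n / d)
      = ∑ d ∈ Icc 1 N, a d * ∑ e ∈ Icc 1 (N / d), c e := by
  let A : ArithmeticFunction R := ⟨fun n => if n = 0 then 0 else a n, if_pos rfl⟩
  let C : ArithmeticFunction R := ⟨fun n => if n = 0 then 0 else c n, if_pos rfl⟩
  have hA {d : ℕ} (hd : 0 < d) : A d = a d := if_neg hd.ne'
  have hC {d : ℕ} (hd : 0 < d) : C d = c d := if_neg hd.ne'
  have key := ArithmeticFunction.sum_Ioc_mul_eq_sum_sum A C N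
  simp only [← Icc_add_one_left_eq_Ioc, zero_add, ArithmeticFunction.mul_apply,
    Nat.sum_divisorsAntidiagonal (fun x y => A x * C y)] at key
  convert key using 2 with n hn d hd
  · refine sum_congr rfl fun d hd => ?_
    have hd0 := Nat.pos_of_mem_divisors hd
    rw [hA hd0, hC (Nat.div_pos (Nat.divisor_le hd) hd0)]
  · rw [hA (mem_Icc.mp hd).1]
    exact congrArg _ (sum_congr rfl fun e he => (hC (mem_Icc.mp he).1).symm)

theorem sum_Icc_one_add_sum_Ioc {M : Type*} [AddCommMonoid M] (f : ℕ → M) {K N : ℕ}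
    (h : K ≤ N) : ∑ n ∈ Icc 1 K, f n + ∑ n ∈ Ioc K N, f n = ∑ n ∈ Icc 1 N, f n := by
  have hIcc (m : ℕ) : Icc 1 m = Ioc 0 m := Icc_add_one_left_eq_Ioc 0 m
  rw [hIcc, hIcc, sum_Ioc_consecutive f K.zero_le h]

theorem sum_Ioc_floor_mul_fract_div {x : ℝ} (hx : 0 ≤ x) (a : ℕ → ℂ) (N : ℕ) :
    ∑ n ∈ Ioc ⌊x⌋₊ N, a n / n * ((Int.fract (x / n) : ℝ) : ℂ)
      = x * ∑ n ∈ Ioc ⌊x⌋₊ N, a n / (n : ℂ) ^ 2 := by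
  rw [mul_sum]
  refine sum_congr rfl fun n hn => ?_
  have hxn : x < n := (Nat.floor_lt hx).mp (mem_Ioc.mp hn).1
  have hn0 : (0 : ℝ) < n := hx.trans_lt hxn
  rw [Int.fract_eq_self.mpr ⟨div_nonneg hx hn0.le, (div_lt_one hn0).mpr hxn⟩]
  have : (n : ℂ) ≠ 0 := by exact_mod_cast hn0.ne'
  push_cast
  field_simp

theorem eq_of_tendsto_neg_sum_mul_fract {a : ℕ → ℂ} {σ : ℂ}
    (ha : Tendsto (fun N : ℕ => ∑ n ∈ Icc 1 N, a n / (n : ℂ) ^ 2) atTop (𝓝 σ))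
    {x : ℝ} (hx : 0 ≤ x) {L : ℂ}
    (hL : Tendsto (fun N : ℕ => -∑ n ∈ Icc 1 N, a n / n * ((Int.fract (x / n) : ℝ) : ℂ))
      atTop (𝓝 L)) :
    L = -∑ n ∈ Icc 1 ⌊x⌋₊, a n / n * ((Int.fract (x / n) : ℝ) : ℂ)
      - x * (σ - ∑ n ∈ Icc 1 ⌊x⌋₊, a n / (n : ℂ) ^ 2) := by
  refine tendsto_nhds_unique hL ((tendsto_const_nhds.sub
    ((ha.sub tendsto_const_nhds).const_mul (x : ℂ))).congr' ?_)
  filter_upwards [eventually_ge_atTop ⌊x⌋₊] with N hN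
  rw [← sum_Icc_one_add_sum_Ioc _ hN, ← sum_Icc_one_add_sum_Ioc _ hN,
    sum_Ioc_floor_mul_fract_div hx]
  ring

theorem sum_sum_divisors_add_sum_mul_fract {x : ℝ} (hx : 0 ≤ x) (a : ℕ → ℂ) :
    ∑ n ∈ Icc 1 ⌊x⌋₊, ∑ d ∈ n.divisors, a d * ((n / d : ℕ) : ℂ)
      + x * ∑ d ∈ Icc 1 ⌊x⌋₊, a d / d * ((Int.fract (x / d) : ℝ) : ℂ)
      - x ^ 2 * ∑ d ∈ Icc 1 ⌊x⌋₊, a d / (d : ℂ) ^ 2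
      = ∑ d ∈ Icc 1 ⌊x⌋₊, a d * (triangularError (x / d) : ℂ) := by
  rw [sum_Icc_sum_divisors_mul a (fun e => (e : ℂ)), mul_sum, mul_sum, ← sum_add_distrib,
    ← sum_sub_distrib]
  refine sum_congr rfl fun d hd => ?_
  have hd0 : (0 : ℝ) < d := by exact_mod_cast (mem_Icc.mp hd).1
  have hdC : (d : ℂ) ≠ 0 := by exact_mod_cast hd0.ne'
  rw [← Nat.floor_div_natCast, sum_Icc_floor_natCast (div_nonneg hx hd0.le)]
  push_cast
  field_simp
  ring

theorem sum_Icc_floor_mul_triangularError {x : ℝ} (hx : 0 ≤ x) {M : ℕ} (hxM : x < M)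
    (a : ℕ → ℂ) :
    ∑ d ∈ Icc 1 ⌊x⌋₊, a d * (triangularError (x / d) : ℂ)
      = ∑ d ∈ Icc 1 M, a d * (triangularError (x / d) : ℂ) := by
  refine sum_subset (Icc_subset_Icc_right ((Nat.floor_lt hx).mpr hxM).le) fun d hdM hdK => ?_
  have hxd : x < d := (Nat.floor_lt hx).mp (by simp only [mem_Icc] at hdM hdK; omega)
  have hd0 : (0 : ℝ) < d := hx.trans_lt hxd
  rw [triangularError_eq_zero (div_nonneg hx hd0.le) ((div_lt_one hd0).mpr hxd),
    Complex.ofReal_zero, mul_zero]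

theorem continuousOn_Ici_of_eqOn_Ico {E : Type*} [TopologicalSpace E] {f : ℝ → E}
    (F : ℕ → ℝ → E) (hF : ∀ M, Continuous (F M))
    (hf : ∀ M : ℕ, Set.EqOn f (F M) (Set.Ico 0 M)) :
    ContinuousOn f (Set.Ici 0) := by
  intro x hx
  have hxM : x < (⌊x⌋₊ + 1 : ℕ) := by exact_mod_cast Nat.lt_floor_add_one x
  refine (hF _).continuousWithinAt.congr_of_eventuallyEq ?_ (hf _ ⟨hx, hxM⟩)
  filter_upwards [self_mem_nhdsWithin, nhdsWithin_le_nhds (Iio_mem_nhds hxM)] with y hy hyM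
  exact hf _ ⟨hy, hyM⟩

/-- The function `R(x) = Er(x) − x·f₁(x)` is continuous on `[0,∞)`. -/
theorem stmt_4
    (a : ℕ → ℂ) (α : ℂ)
    (ha : Tendsto (fun N : ℕ => ∑ n ∈ Finset.Icc 1 N, a n / (n : ℂ) ^ 2)
      atTop (nhds (2 * α)))
    (b : ℕ → ℂ)
    (hb : ∀ n : ℕ, 0 < n → b n = ∑ d ∈ n.divisors, a d * ((n / d : ℕ) : ℂ))
    (Er : ℝ → ℂ)
    (hEr : ∀ x : ℝ, 0 ≤ x →
      Er x = (∑ n ∈ Finset.Icc 1 ⌊x⌋₊, b n) - α * (x : ℂ) ^ 2)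
    (f₁ : ℝ → ℂ)
    (hf₁ : ∀ x : ℝ, 0 ≤ x →
      Tendsto (fun N : ℕ => -∑ n ∈ Finset.Icc 1 N,
          a n / (n : ℂ) * ((Int.fract (x / (n : ℝ)) : ℝ) : ℂ))
        atTop (nhds (f₁ x)))
    (R : ℝ → ℂ)
    (hR : ∀ x : ℝ, 0 ≤ x → R x = Er x - (x : ℂ) * f₁ x) :
    ContinuousOn R (Set.Ici 0) := by
  have hR_eq (x : ℝ) (hx : 0 ≤ x) :
      R x = α * (x : ℂ) ^ 2 + ∑ d ∈ Icc 1 ⌊x⌋₊, a d * (triangularError (x / d) : ℂ) := by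
    rw [hR x hx, hEr x hx, eq_of_tendsto_neg_sum_mul_fract ha hx (hf₁ x hx),
      sum_congr rfl fun n hn => hb n (mem_Icc.mp hn).1,
      ← sum_sum_divisors_add_sum_mul_fract hx a]
    ring
  refine continuousOn_Ici_of_eqOn_Ico
    (fun M x => α * (x : ℂ) ^ 2 + ∑ d ∈ Icc 1 M, a d * (triangularError (x / d) : ℂ))
    (fun M => by fun_prop) fun M x hx => ?_
  rw [hR_eq x hx.1, sum_Icc_floor_mul_triangularError hx.1 hx.2]
end

section
/- For every positive integer N, the one-sided limits f₁(N+0) = lim_{x→N+} f₁(x) and f₁(N−0) = lim_{x→N−} f₁(x) exist and satisfy f₁(N+0) − f₁(N−0) = b(N)/N. -/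
open Filter MeasureTheory Set

private lemma fract_eq_aux (K n : ℕ) (hn : 1 ≤ n) (x : ℝ) (hx : (K : ℝ) ≤ x)
    (hx' : x < K + 1) :
    Int.fract (x / n) = x / n - ((K / n : ℕ) : ℝ) := by
  have hn0 : (0 : ℝ) < n := by exact_mod_cast hn
  have hlow : ((K / n : ℕ) : ℝ) ≤ x / n := by
    rw [le_div_iff₀ hn0]
    calc ((K / n : ℕ) : ℝ) * n = ((K / n * n : ℕ) : ℝ) := by push_cast; ring
      _ ≤ (K : ℝ) := by exact_mod_cast Nat.div_mul_le_self K n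
      _ ≤ x := hx
  have hhigh : x / n < ((K / n : ℕ) : ℝ) + 1 := by
    rw [div_lt_iff₀ hn0]
    have h2 : K % n + 1 ≤ n := Nat.mod_lt K (by omega)
    have h1 : K + 1 ≤ (K / n + 1) * n := by
      calc K + 1 = n * (K / n) + K % n + 1 := by rw [Nat.div_add_mod]
        _ ≤ n * (K / n) + n := by omega
        _ = (K / n + 1) * n := by ring
    calc x < K + 1 := hx'
      _ ≤ (((K / n + 1) * n : ℕ) : ℝ) := by exact_mod_cast h1
      _ = (((K / n : ℕ) : ℝ) + 1) * n := by push_cast; ring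
  have hfloor : ⌊x / (n : ℝ)⌋ = ((K / n : ℕ) : ℤ) := by
    rw [Int.floor_eq_iff]
    exact ⟨by exact_mod_cast hlow, by exact_mod_cast hhigh⟩
  rw [Int.fract, hfloor]
  rw [Int.cast_natCast]

private lemma key_affine (a : ℕ → ℂ) (α : ℂ)
    (ha : Tendsto (fun N : ℕ => ∑ n ∈ Finset.Icc 1 N, a n / (n : ℂ) ^ 2)
      atTop (nhds (2 * α)))
    (f₁ : ℝ → ℂ)
    (hf₁ : ∀ x : ℝ, 0 ≤ x →
      Tendsto (fun N : ℕ => -∑ n ∈ Finset.Icc 1 N,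
          a n / (n : ℂ) * ((Int.fract (x / (n : ℝ)) : ℝ) : ℂ))
        atTop (nhds (f₁ x)))
    (K : ℕ) (x : ℝ) (hx : (K : ℝ) ≤ x) (hx' : x < K + 1) :
    f₁ x = f₁ K - ((x - K : ℝ) : ℂ) * (2 * α) := by
  have hx0 : (0 : ℝ) ≤ x := le_trans (Nat.cast_nonneg K) hx
  refine tendsto_nhds_unique (hf₁ x hx0) ?_
  have heq : (fun M : ℕ => -∑ n ∈ Finset.Icc 1 M,
      a n / (n : ℂ) * ((Int.fract (x / (n : ℝ)) : ℝ) : ℂ))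
      = fun M : ℕ => (-∑ n ∈ Finset.Icc 1 M,
          a n / (n : ℂ) * ((Int.fract ((K : ℝ) / (n : ℝ)) : ℝ) : ℂ))
        - ((x - K : ℝ) : ℂ) * ∑ n ∈ Finset.Icc 1 M, a n / (n : ℂ) ^ 2 := by
    funext M
    have hterm : ∀ n ∈ Finset.Icc 1 M,
        a n / (n : ℂ) * ((Int.fract (x / (n : ℝ)) : ℝ) : ℂ)
        = a n / (n : ℂ) * ((Int.fract ((K : ℝ) / (n : ℝ)) : ℝ) : ℂ)
          + ((x - K : ℝ) : ℂ) * (a n / (n : ℂ) ^ 2) := by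
      intro n hn
      have hn1 : 1 ≤ n := (Finset.mem_Icc.mp hn).1
      have hnC : ((n : ℝ) : ℂ) ≠ 0 := by
        simp only [ne_eq, Complex.ofReal_natCast, Nat.cast_eq_zero]; omega
      rw [fract_eq_aux K n hn1 x hx hx',
        fract_eq_aux K n hn1 (K : ℝ) le_rfl (by linarith)]
      push_cast
      field_simp [show (n : ℂ) ≠ 0 by exact_mod_cast hnC]
      ring
    rw [Finset.sum_congr rfl hterm, Finset.sum_add_distrib, ← Finset.mul_sum]
    ring
  rw [heq]
  exact (hf₁ K (Nat.cast_nonneg K)).sub (tendsto_const_nhds.mul ha)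

/-- For every positive integer `N`, the one-sided limits
`f₁(N+0) = lim_{x→N+} f₁(x)` and `f₁(N−0) = lim_{x→N−} f₁(x)` exist and satisfy
`f₁(N+0) − f₁(N−0) = b(N)/N`. -/
theorem stmt_5
    (a : ℕ → ℂ) (α : ℂ)
    (ha : Tendsto (fun N : ℕ => ∑ n ∈ Finset.Icc 1 N, a n / (n : ℂ) ^ 2)
      atTop (nhds (2 * α)))
    (b : ℕ → ℂ)
    (hb : ∀ n : ℕ, 0 < n → b n = ∑ d ∈ n.divisors, a d * ((n / d : ℕ) : ℂ))
    (f₁ : ℝ → ℂ)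
    (hf₁ : ∀ x : ℝ, 0 ≤ x →
      Tendsto (fun N : ℕ => -∑ n ∈ Finset.Icc 1 N,
          a n / (n : ℂ) * ((Int.fract (x / (n : ℝ)) : ℝ) : ℂ))
        atTop (nhds (f₁ x)))
    (N : ℕ) (hN : 0 < N) :
    ∃ Lplus Lminus : ℂ,
      Tendsto f₁ (nhdsWithin (N : ℝ) (Set.Ioi (N : ℝ))) (nhds Lplus) ∧
      Tendsto f₁ (nhdsWithin (N : ℝ) (Set.Iio (N : ℝ))) (nhds Lminus) ∧
      Lplus - Lminus = b N / (N : ℂ) := by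
  set K : ℕ := N - 1 with hKdef
  have hKN : K + 1 = N := Nat.succ_pred_eq_of_pos hN
  have hKcast : ((K : ℝ) + 1) = (N : ℝ) := by exact_mod_cast congrArg (Nat.cast : ℕ → ℝ) hKN
  -- the divisor sum
  set D : ℂ := ∑ n ∈ N.divisors, a n / (n : ℂ) with hDdef
  -- jump relation : f₁ N = f₁ K - 2α + D
  have hjump : f₁ (N : ℝ) = f₁ (K : ℝ) - 2 * α + D := by
    have hev : (fun M : ℕ => ((-∑ n ∈ Finset.Icc 1 M,
          a n / (n : ℂ) * ((Int.fract ((K : ℝ) / (n : ℝ)) : ℝ) : ℂ))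
          - ∑ n ∈ Finset.Icc 1 M, a n / (n : ℂ) ^ 2) + D)
        =ᶠ[atTop] (fun M : ℕ => -∑ n ∈ Finset.Icc 1 M,
          a n / (n : ℂ) * ((Int.fract ((N : ℝ) / (n : ℝ)) : ℝ) : ℂ)) := by
      filter_upwards [eventually_ge_atTop N] with M hM
      have hterm : ∀ n ∈ Finset.Icc 1 M,
          a n / (n : ℂ) * ((Int.fract ((N : ℝ) / (n : ℝ)) : ℝ) : ℂ)
          = a n / (n : ℂ) * ((Int.fract ((K : ℝ) / (n : ℝ)) : ℝ) : ℂ)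
            + a n / (n : ℂ) ^ 2
            - (if n ∣ N then a n / (n : ℂ) else 0) := by
        intro n hn
        have hn1 : 1 ≤ n := (Finset.mem_Icc.mp hn).1
        have hnC : ((n : ℝ) : ℂ) ≠ 0 := by
          simp only [ne_eq, Complex.ofReal_natCast, Nat.cast_eq_zero]; omega
        have hdivN : N / n = K / n + if n ∣ N then 1 else 0 := by
          conv_lhs => rw [← hKN]
          rw [Nat.succ_div, hKN]
        rw [fract_eq_aux N n hn1 (N : ℝ) le_rfl (by linarith),
          fract_eq_aux K n hn1 (K : ℝ) le_rfl (by linarith), hdivN]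
        by_cases h : n ∣ N
        · simp only [h, if_true]
          rw [← hKcast]
          push_cast
          field_simp [show (n : ℂ) ≠ 0 by exact_mod_cast hnC]
          try ring
        · simp only [h, if_false]
          rw [← hKcast]
          push_cast
          field_simp [show (n : ℂ) ≠ 0 by exact_mod_cast hnC]
          try ring
      have hdivsum : ∑ n ∈ Finset.Icc 1 M, (if n ∣ N then a n / (n : ℂ) else 0) = D := by
        rw [← Finset.sum_filter]
        apply Finset.sum_congr _ (fun _ _ => rfl)
        ext n
        simp only [Finset.mem_filter, Finset.mem_Icc, Nat.mem_divisors]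
        constructor
        · rintro ⟨⟨h1, h2⟩, h3⟩; exact ⟨h3, by omega⟩
        · rintro ⟨h1, h2⟩
          have hn0 : 0 < n := Nat.pos_of_dvd_of_pos h1 hN
          have hnN : n ≤ N := Nat.le_of_dvd hN h1
          exact ⟨⟨hn0, le_trans hnN hM⟩, h1⟩
      rw [Finset.sum_congr rfl hterm]
      rw [Finset.sum_sub_distrib, Finset.sum_add_distrib, hdivsum]
      ring
    have h1 := hf₁ (N : ℝ) (Nat.cast_nonneg N)
    have h2 := hf₁ (K : ℝ) (Nat.cast_nonneg K)
    have h3 : Tendsto (fun M : ℕ => ((-∑ n ∈ Finset.Icc 1 M,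
          a n / (n : ℂ) * ((Int.fract ((K : ℝ) / (n : ℝ)) : ℝ) : ℂ))
          - ∑ n ∈ Finset.Icc 1 M, a n / (n : ℂ) ^ 2) + D)
        atTop (nhds ((f₁ (K : ℝ) - 2 * α) + D)) :=
      (h2.sub ha).add tendsto_const_nhds
    exact tendsto_nhds_unique h1 (h3.congr' hev)
  refine ⟨f₁ (N : ℝ), f₁ (K : ℝ) - 2 * α, ?_, ?_, ?_⟩
  · -- right limit
    have hcont : Tendsto (fun x : ℝ => f₁ (N : ℝ) - ((x - N : ℝ) : ℂ) * (2 * α))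
        (nhdsWithin (N : ℝ) (Set.Ioi (N : ℝ))) (nhds (f₁ (N : ℝ))) := by
      have hc : Continuous (fun x : ℝ => f₁ (N : ℝ) - ((x - N : ℝ) : ℂ) * (2 * α)) := by
        fun_prop
      have := (hc.tendsto (N : ℝ)).mono_left
        (nhdsWithin_le_nhds (s := Set.Ioi (N : ℝ)))
      simpa using this
    refine hcont.congr' ?_
    filter_upwards [Ioo_mem_nhdsGT_of_mem
      (show (N : ℝ) ∈ Set.Ico (N : ℝ) (N + 1) by constructor <;> simp)] with x hx
    exact (key_affine a α ha f₁ hf₁ N x (le_of_lt hx.1) hx.2).symm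
  · -- left limit
    have hcont : Tendsto (fun x : ℝ => f₁ (K : ℝ) - ((x - K : ℝ) : ℂ) * (2 * α))
        (nhdsWithin (N : ℝ) (Set.Iio (N : ℝ))) (nhds (f₁ (K : ℝ) - 2 * α)) := by
      have hc : Continuous (fun x : ℝ => f₁ (K : ℝ) - ((x - K : ℝ) : ℂ) * (2 * α)) := by
        fun_prop
      have := (hc.tendsto (N : ℝ)).mono_left
        (nhdsWithin_le_nhds (s := Set.Iio (N : ℝ)))
      have h4 : (((N : ℝ) - K : ℝ) : ℂ) = 1 := by
        rw [show ((N : ℝ) - K) = 1 by linarith]; simp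
      simpa [h4] using this
    refine hcont.congr' ?_
    have hKltN : (K : ℝ) < N := by linarith
    filter_upwards [Ioo_mem_nhdsLT_of_mem
      (show (N : ℝ) ∈ Set.Ioc (K : ℝ) (N : ℝ) from ⟨hKltN, le_rfl⟩)] with x hx
    exact (key_affine a α ha f₁ hf₁ K x (le_of_lt hx.1) (by linarith [hx.2])).symm
  · -- jump value
    rw [hjump, hb N hN, Finset.sum_div]
    have : f₁ ↑K - 2 * α + D - (f₁ ↑K - 2 * α) = D := by ring
    rw [this, hDdef]
    apply Finset.sum_congr rfl
    intro d hd
    obtain ⟨hdN, hN0⟩ := Nat.mem_divisors.mp hd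
    have hd0 : d ≠ 0 := fun h => hN0 (by simpa [h] using hdN)
    have hdC : (d : ℂ) ≠ 0 := Nat.cast_ne_zero.mpr hd0
    have hNC : (N : ℂ) ≠ 0 := Nat.cast_ne_zero.mpr hN0
    rw [div_eq_div_iff hdC hNC, mul_comm (a d) _, mul_assoc, ← Nat.cast_mul,
      Nat.div_mul_cancel hdN, mul_comm]
end

section
/- For every x > 0 that is not an integer, the function f₁ is differentiable at x with f₁′(x) = −2α; that is, the series defining f₁ may be differentiated term by term at non-integer points. -/
/-! Writing `{y/n} = y/n - ⌊y/n⌋`, the `N`-th partial sum defining `f₁ y` becomes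
`-y ∑_{n ≤ N} a(n)/n² + ∑_{n ≤ N} (a(n)/n) ⌊y/n⌋`. For `n > y` the floor vanishes, so the second
sum is a finite sum independent of `N`, and `f₁ y = -2α y + ∑_{n ≤ M} (a(n)/n) ⌊y/n⌋` for
`0 ≤ y ≤ M`. When `x` is not an integer, none of the `x/n` is, so every floor is locally constant
at `x`: near `x`, `f₁` is an affine function of slope `-2α`. -/

open Filter Topology

theorem Int.eventually_floor_eq {R : Type*} [Ring R] [LinearOrder R] [IsStrictOrderedRing R]
    [FloorRing R] [TopologicalSpace R] [OrderTopology R] {x : R} (hx : x ≠ ⌊x⌋) :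
    ∀ᶠ y in 𝓝 x, ⌊y⌋ = ⌊x⌋ :=
  mem_of_superset (Ico_mem_nhds ((Int.floor_le x).lt_of_ne hx.symm) (Int.lt_floor_add_one x))
    fun _ hy => Int.floor_eq_on_Ico _ _ hy

theorem eventually_floor_div_natCast_eq {x : ℝ} (hx : ∀ m : ℤ, x ≠ m) (n : ℕ) :
    ∀ᶠ y in 𝓝 x, ⌊y / (n : ℝ)⌋ = ⌊x / n⌋ := by
  rcases eq_or_ne n 0 with rfl | hn
  · simp
  have hxn : x / n ≠ ⌊x / n⌋ := fun h => hx (⌊x / n⌋ * n) (by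
    push_cast
    rw [← h]
    field_simp)
  exact ((continuous_id.div_const (n : ℝ)).tendsto x).eventually (Int.eventually_floor_eq hxn)

namespace FractionalPartSeries

variable (a : ℕ → ℂ)

noncomputable def floorSum (M : ℕ) (y : ℝ) : ℂ :=
  ∑ n ∈ Finset.Icc 1 M, a n / n * ⌊y / n⌋

theorem sum_mul_fract_div_eq (N : ℕ) (y : ℝ) :
    ∑ n ∈ Finset.Icc 1 N, a n / n * ((Int.fract (y / n) : ℝ) : ℂ) =
      y * ∑ n ∈ Finset.Icc 1 N, a n / (n : ℂ) ^ 2 - floorSum a N y := by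
  rw [floorSum, Finset.mul_sum, ← Finset.sum_sub_distrib]
  refine Finset.sum_congr rfl fun n hn => ?_
  have hn0 : (n : ℂ) ≠ 0 := Nat.cast_ne_zero.2 (Nat.one_le_iff_ne_zero.1 (Finset.mem_Icc.1 hn).1)
  rw [Int.fract]
  push_cast
  field_simp

theorem floorSum_eq_of_le {y : ℝ} (hy : 0 ≤ y) {M N : ℕ} (hyM : y ≤ M) (hMN : M ≤ N) :
    floorSum a N y = floorSum a M y := by
  refine (Finset.sum_subset (Finset.Icc_subset_Icc_right hMN) fun n hnN hnM => ?_).symm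
  have hMn : (M : ℝ) < n := by
    simp only [Finset.mem_Icc, not_and, not_le] at hnN hnM
    exact_mod_cast hnM hnN.1
  have hfloor : ⌊y / n⌋ = 0 :=
    Int.floor_eq_zero_iff.2 ⟨by positivity, (div_lt_one (by linarith)).2 (by linarith)⟩
  simp [hfloor]

theorem tendsto_neg_sum_mul_fract {α : ℂ}
    (ha : Tendsto (fun N : ℕ => ∑ n ∈ Finset.Icc 1 N, a n / (n : ℂ) ^ 2) atTop (𝓝 (2 * α)))
    {y : ℝ} (hy : 0 ≤ y) {M : ℕ} (hyM : y ≤ M) :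
    Tendsto (fun N : ℕ => -∑ n ∈ Finset.Icc 1 N, a n / n * ((Int.fract (y / n) : ℝ) : ℂ))
      atTop (𝓝 (-(2 * α) * y + floorSum a M y)) := by
  have hlim : Tendsto (fun N : ℕ => -(y * ∑ n ∈ Finset.Icc 1 N, a n / (n : ℂ) ^ 2) +
      floorSum a M y) atTop (𝓝 (-(y * (2 * α)) + floorSum a M y)) :=
    (ha.const_mul _).neg.add_const _
  rw [show -(2 * α) * y = -(y * (2 * α)) by ring]
  refine hlim.congr' ?_
  filter_upwards [eventually_ge_atTop M] with N hMN
  rw [sum_mul_fract_div_eq, floorSum_eq_of_le a hy hyM hMN]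
  ring

theorem floorSum_eventually_eq {x : ℝ} (hx : ∀ m : ℤ, x ≠ m) (M : ℕ) :
    ∀ᶠ y in 𝓝 x, floorSum a M y = floorSum a M x := by
  filter_upwards [(eventually_all_finset _).2 fun n _ =>
    eventually_floor_div_natCast_eq hx n] with y hy
  exact Finset.sum_congr rfl fun n hn => by rw [hy n hn]

end FractionalPartSeries

/-- For every `x > 0` that is not an integer, the function `f₁` is
differentiable at `x` with `f₁′(x) = −2α`. -/
theorem stmt_6
    (a : ℕ → ℂ) (α : ℂ)
    (ha : Tendsto (fun N : ℕ => ∑ n ∈ Finset.Icc 1 N, a n / (n : ℂ) ^ 2)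
      atTop (nhds (2 * α)))
    (f₁ : ℝ → ℂ)
    (hf₁ : ∀ x : ℝ, 0 ≤ x →
      Tendsto (fun N : ℕ => -∑ n ∈ Finset.Icc 1 N,
          a n / (n : ℂ) * ((Int.fract (x / (n : ℝ)) : ℝ) : ℂ))
        atTop (nhds (f₁ x)))
    (x : ℝ) (hx : 0 < x) (hxZ : ∀ m : ℤ, x ≠ (m : ℝ)) :
    HasDerivAt f₁ (-(2 * α)) x := by
  obtain ⟨M, hxM⟩ := exists_nat_gt x
  set C := FractionalPartSeries.floorSum a M x with hC
  have hf₁_affine : f₁ =ᶠ[𝓝 x] fun y => -(2 * α) * y + C := by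
    filter_upwards [eventually_gt_nhds hx, eventually_lt_nhds hxM,
      FractionalPartSeries.floorSum_eventually_eq a hxZ M] with y hy0 hyM hfloor
    rw [hC, ← hfloor]
    exact tendsto_nhds_unique (hf₁ y hy0.le)
      (FractionalPartSeries.tendsto_neg_sum_mul_fract a ha hy0.le hyM.le)
  refine HasDerivAt.congr_of_eventuallyEq ?_ hf₁_affine
  simpa using (Complex.ofRealCLM.hasDerivAt.const_mul (-(2 * α))).add_const C
end

section
/- For every x > 0 that is not an integer, the function R(x) = Er(x) − x·f₁(x) is differentiable at x with R′(x) = −f₁(x). -/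
open Filter MeasureTheory Set

/-- For every `x > 0` that is not an integer, the function
`R(x) = Er(x) − x·f₁(x)` is differentiable at `x` with `R′(x) = −f₁(x)`. -/
theorem stmt_7
    (a : ℕ → ℂ) (α : ℂ)
    (ha : Tendsto (fun N : ℕ => ∑ n ∈ Finset.Icc 1 N, a n / (n : ℂ) ^ 2)
      atTop (nhds (2 * α)))
    (b : ℕ → ℂ)
    (hb : ∀ n : ℕ, 0 < n → b n = ∑ d ∈ n.divisors, a d * ((n / d : ℕ) : ℂ))
    (Er : ℝ → ℂ)
    (hEr : ∀ x : ℝ, 0 ≤ x →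
      Er x = (∑ n ∈ Finset.Icc 1 ⌊x⌋₊, b n) - α * (x : ℂ) ^ 2)
    (f₁ : ℝ → ℂ)
    (hf₁ : ∀ x : ℝ, 0 ≤ x →
      Tendsto (fun N : ℕ => -∑ n ∈ Finset.Icc 1 N,
          a n / (n : ℂ) * ((Int.fract (x / (n : ℝ)) : ℝ) : ℂ))
        atTop (nhds (f₁ x)))
    (R : ℝ → ℂ)
    (hR : ∀ x : ℝ, 0 ≤ x → R x = Er x - (x : ℂ) * f₁ x)
    (x : ℝ) (hx : 0 < x) (hxZ : ∀ m : ℤ, x ≠ (m : ℝ)) :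
    HasDerivAt R (-f₁ x) x := by
  set N₀ := ⌊x⌋₊ with hN₀def
  have hxN₀ : (N₀ : ℝ) < x := by
    rcases lt_or_eq_of_le (Nat.floor_le hx.le) with h | h
    · exact h
    · exact absurd h.symm (by exact_mod_cast hxZ (N₀ : ℤ))
  have hxN₁ : x < N₀ + 1 := Nat.lt_floor_add_one x
  -- strict floor bounds for x/n, n ∈ [1, N₀]
  have hstrict : ∀ n : ℕ, n ∈ Finset.Icc 1 N₀ →
      (⌊x / (n : ℝ)⌋ : ℝ) < x / n ∧ x / n < ⌊x / (n : ℝ)⌋ + 1 := by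
    intro n hn
    simp only [Finset.mem_Icc] at hn
    have hn0 : (0:ℝ) < n := by exact_mod_cast hn.1
    refine ⟨lt_of_le_of_ne (Int.floor_le _) ?_, Int.lt_floor_add_one _⟩
    intro h
    have : x = ((n * ⌊x / (n:ℝ)⌋ : ℤ) : ℝ) := by
      push_cast
      field_simp at h ⊢
      linarith [h]
    exact hxZ _ this
  set C₂ : ℂ := ∑ n ∈ Finset.Icc 1 N₀, a n / (n : ℂ) * ((⌊x / (n : ℝ)⌋ : ℝ) : ℂ) with hC₂def
  -- the key local formula for f₁
  have key : ∀ y : ℝ, 0 < y → (N₀ : ℝ) < y → y < N₀ + 1 →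
      (∀ n ∈ Finset.Icc 1 N₀,
        (⌊x / (n : ℝ)⌋ : ℝ) < y / n ∧ y / n < ⌊x / (n : ℝ)⌋ + 1) →
      f₁ y = -(2 * α) * y + C₂ := by
    intro y hy0 hy1 hy2 hy3
    have hlim := hf₁ y hy0.le
    have heq : (fun N : ℕ =>
        -∑ n ∈ Finset.Icc 1 N, a n / (n : ℂ) * ((Int.fract (y / (n:ℝ)) : ℝ) : ℂ))
          =ᶠ[atTop] (fun N : ℕ =>
        -((y:ℂ) * ∑ n ∈ Finset.Icc 1 N, a n / (n : ℂ) ^ 2) + C₂) := by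
      filter_upwards [eventually_ge_atTop N₀] with N hN
      have hsum : ∀ n ∈ Finset.Icc 1 N,
          a n / (n : ℂ) * ((Int.fract (y / (n:ℝ)) : ℝ) : ℂ)
            = (y:ℂ) * (a n / (n : ℂ) ^ 2)
              - (if n ∈ Finset.Icc 1 N₀ then a n / (n : ℂ) * ((⌊x / (n : ℝ)⌋ : ℝ) : ℂ) else 0) := by
        intro n hn
        simp only [Finset.mem_Icc] at hn
        have hn0 : (0:ℝ) < n := by exact_mod_cast hn.1
        have hn0' : (n : ℂ) ≠ 0 := Nat.cast_ne_zero.mpr (by omega)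
        by_cases hcase : n ≤ N₀
        · have hmem : n ∈ Finset.Icc 1 N₀ := Finset.mem_Icc.mpr ⟨hn.1, hcase⟩
          obtain ⟨h1, h2⟩ := hy3 n hmem
          have hfl : ⌊y / (n:ℝ)⌋ = ⌊x / (n:ℝ)⌋ :=
            Int.floor_eq_iff.mpr ⟨h1.le, h2⟩
          have hfr : Int.fract (y / (n:ℝ)) = y / n - (⌊x / (n : ℝ)⌋ : ℝ) := by
            rw [Int.fract, hfl]
          rw [hfr, if_pos hmem]
          push_cast
          field_simp
        · have hlt : y / (n:ℝ) < 1 := by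
            rw [div_lt_one hn0]
            have : ((N₀:ℝ) + 1) ≤ n := by
              have : N₀ + 1 ≤ n := by omega
              exact_mod_cast this
            linarith
          have hfr : Int.fract (y / (n:ℝ)) = y / n :=
            Int.fract_eq_self.mpr ⟨by positivity, hlt⟩
          rw [hfr, if_neg (by simp [Finset.mem_Icc]; omega)]
          push_cast
          field_simp
          ring
      rw [Finset.sum_congr rfl hsum, Finset.sum_sub_distrib, ← Finset.mul_sum,
        Finset.sum_ite_mem, Finset.inter_eq_right.mpr
          (Finset.Icc_subset_Icc le_rfl hN)]
      ring
    have hlim2 : Tendsto (fun N : ℕ =>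
        -∑ n ∈ Finset.Icc 1 N, a n / (n : ℂ) * ((Int.fract (y / (n:ℝ)) : ℝ) : ℂ))
        atTop (nhds (-(2 * α) * y + C₂)) := by
      have : Tendsto (fun N : ℕ =>
          -((y:ℂ) * ∑ n ∈ Finset.Icc 1 N, a n / (n : ℂ) ^ 2) + C₂)
          atTop (nhds (-((y:ℂ) * (2 * α)) + C₂)) :=
        (((ha.const_mul (y:ℂ)).neg).add_const C₂)
      have h' : -((y:ℂ) * (2 * α)) + C₂ = -(2 * α) * y + C₂ := by ring
      rw [h'] at this
      exact Tendsto.congr' heq.symm this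
    exact tendsto_nhds_unique hlim hlim2
  have hfx : f₁ x = -(2 * α) * x + C₂ := key x hx hxN₀ hxN₁ hstrict
  -- eventual neighborhood conditions
  have hev : ∀ᶠ y in nhds x, (N₀ : ℝ) < y ∧ y < N₀ + 1 ∧
      ∀ n ∈ Finset.Icc 1 N₀,
        (⌊x / (n : ℝ)⌋ : ℝ) < y / n ∧ y / n < ⌊x / (n : ℝ)⌋ + 1 := by
    have h1 : ∀ᶠ y in nhds x, (N₀ : ℝ) < y := eventually_gt_nhds hxN₀
    have h2 : ∀ᶠ y in nhds x, y < (N₀:ℝ) + 1 := eventually_lt_nhds hxN₁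
    have h3 : ∀ᶠ y in nhds x, ∀ n ∈ Finset.Icc 1 N₀,
        (⌊x / (n : ℝ)⌋ : ℝ) < y / n ∧ y / n < ⌊x / (n : ℝ)⌋ + 1 := by
      rw [Finset.eventually_all]
      intro n hn
      obtain ⟨hl, hu⟩ := hstrict n hn
      have hc : Tendsto (fun y : ℝ => y / n) (nhds x) (nhds (x / n)) :=
        tendsto_id.div_const _
      exact hc.eventually (eventually_mem_set.mpr (Ioo_mem_nhds hl hu))
    filter_upwards [h1, h2, h3] with y hy1 hy2 hy3 using ⟨hy1, hy2, hy3⟩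
  set B : ℂ := ∑ n ∈ Finset.Icc 1 N₀, b n with hBdef
  have hRg : ∀ᶠ y in nhds x, R y = B + α * (y:ℂ)^2 - C₂ * (y:ℂ) := by
    filter_upwards [hev] with y hy
    obtain ⟨hy1, hy2, hy3⟩ := hy
    have hy0 : 0 < y := lt_of_le_of_lt (Nat.cast_nonneg N₀) hy1
    have hfl : ⌊y⌋₊ = N₀ := by
      rw [Nat.floor_eq_iff hy0.le]
      exact ⟨hy1.le, by exact_mod_cast hy2⟩
    have hfy : f₁ y = -(2 * α) * y + C₂ := key y hy0 hy1 hy2 hy3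
    rw [hR y hy0.le, hEr y hy0.le, hfl, hfy]
    ring
  have hd : HasDerivAt (fun z : ℂ => B + α * z ^ 2 - C₂ * z) (2 * α * x - C₂) (x : ℂ) := by
    have h1 : HasDerivAt (fun z : ℂ => B + α * z ^ 2 - C₂ * z)
        (α * (2 * (x:ℂ)^1) - C₂ * 1) (x : ℂ) :=
      (((hasDerivAt_pow 2 (x:ℂ)).const_mul α).const_add B).sub
        ((hasDerivAt_id (x:ℂ)).const_mul C₂)
    convert h1 using 1
    ring
  have hg : HasDerivAt (fun y : ℝ => B + α * (y:ℂ) ^ 2 - C₂ * (y:ℂ)) (2 * α * x - C₂) x :=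
    hd.comp_ofReal
  have := hg.congr_of_eventuallyEq hRg
  rw [show -f₁ x = 2 * α * x - C₂ by rw [hfx]; ring]
  exact this
end

section
/- For every x ≥ 0 the series Σ_{n=1}^∞ (a(n)/n)·{x/n} converges, and f₁(x) = −2α·x + Σ_{n≤x} (a(n)/n)·⌊x/n⌋, where the last sum is the finite sum over positive integers n ≤ x. In particular, f₁ is locally bounded on [0,∞). -/
open Filter MeasureTheory Set

/-- For every `x ≥ 0` the series `Σ_{n=1}^∞ (a(n)/n)·{x/n}` converges
and `f₁(x) = −2α·x + Σ_{n≤x} (a(n)/n)·⌊x/n⌋` (a finite sum over `1 ≤ n ≤ x`).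
In particular, `f₁` is locally bounded on `[0,∞)`. -/
theorem stmt_8
    (a : ℕ → ℂ) (α : ℂ)
    (ha : Tendsto (fun N : ℕ => ∑ n ∈ Finset.Icc 1 N, a n / (n : ℂ) ^ 2)
      atTop (nhds (2 * α))) :
    (∀ x : ℝ, 0 ≤ x →
      Tendsto (fun N : ℕ => -∑ n ∈ Finset.Icc 1 N,
          a n / (n : ℂ) * ((Int.fract (x / (n : ℝ)) : ℝ) : ℂ))
        atTop
        (nhds (-(2 * α) * (x : ℂ) +
          ∑ n ∈ Finset.Icc 1 ⌊x⌋₊, a n / (n : ℂ) * ((⌊x / (n : ℝ)⌋ : ℤ) : ℂ)))) ∧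
    (∀ K : ℝ, ∃ C : ℝ, ∀ x ∈ Set.Icc (0:ℝ) K,
      ‖-(2 * α) * (x : ℂ) +
        ∑ n ∈ Finset.Icc 1 ⌊x⌋₊, a n / (n : ℂ) * ((⌊x / (n : ℝ)⌋ : ℤ) : ℂ)‖ ≤ C) := by
  constructor
  · intro x hx
    set M := ⌊x⌋₊ with hM
    set C₀ := ∑ n ∈ Finset.Icc 1 M, a n / (n : ℂ) * ((⌊x / (n : ℝ)⌋ : ℤ) : ℂ) with hC
    have key : ∀ᶠ N in atTop,
        -((x:ℂ) * ∑ n ∈ Finset.Icc 1 N, a n / (n : ℂ) ^ 2) + C₀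
        = -∑ n ∈ Finset.Icc 1 N, a n / (n : ℂ) * ((Int.fract (x / (n : ℝ)) : ℝ) : ℂ) := by
      filter_upwards [eventually_ge_atTop M] with N hN
      have h1 : ∀ n ∈ Finset.Icc 1 N,
          a n / (n:ℂ) * ((Int.fract (x / (n : ℝ)) : ℝ) : ℂ)
          = (x:ℂ) * (a n / (n:ℂ) ^ 2) - a n / (n:ℂ) * ((⌊x / (n : ℝ)⌋ : ℤ) : ℂ) := by
        intro n hn
        have hn1 : (1:ℕ) ≤ n := (Finset.mem_Icc.mp hn).1
        have hn0 : (n:ℂ) ≠ 0 := by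
          exact_mod_cast Nat.cast_ne_zero.mpr (by omega)
        rw [Int.fract]
        push_cast
        field_simp
      rw [Finset.sum_congr rfl h1, Finset.sum_sub_distrib, ← Finset.mul_sum]
      have h2 : ∑ n ∈ Finset.Icc 1 N, a n / (n:ℂ) * ((⌊x / (n : ℝ)⌋ : ℤ) : ℂ) = C₀ := by
        rw [hC]
        refine (Finset.sum_subset (Finset.Icc_subset_Icc_right hN) ?_).symm
        intro n hn hn'
        have hn1 : (1:ℕ) ≤ n := (Finset.mem_Icc.mp hn).1
        have hMn : M < n := by
          by_contra h
          exact hn' (Finset.mem_Icc.mpr ⟨hn1, by omega⟩)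
        have hxn : x < n := by
          have := Nat.lt_floor_add_one x
          have : x < (M:ℝ) + 1 := this
          have hn2 : (M:ℝ) + 1 ≤ (n:ℝ) := by exact_mod_cast hMn
          linarith
        have hfl : ⌊x / (n:ℝ)⌋ = 0 := by
          rw [Int.floor_eq_zero_iff]
          constructor
          · positivity
          · rw [div_lt_one (by positivity : (0:ℝ) < (n:ℝ))]
            exact hxn
        simp [hfl]
      rw [h2]
      ring
    refine Tendsto.congr' key ?_
    have h3 := ((ha.const_mul (x:ℂ)).neg.add_const C₀)
    convert h3 using 2
    ring
  · intro K
    rcases le_or_gt 0 K with hK | hK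
    · refine ⟨‖2 * α‖ * K + ∑ n ∈ Finset.Icc 1 ⌊K⌋₊, ‖a n‖ / n * K, ?_⟩
      rintro x ⟨hx0, hxK⟩
      calc ‖-(2 * α) * (x : ℂ) +
            ∑ n ∈ Finset.Icc 1 ⌊x⌋₊, a n / (n : ℂ) * ((⌊x / (n : ℝ)⌋ : ℤ) : ℂ)‖
          ≤ ‖-(2 * α) * (x : ℂ)‖ +
            ‖∑ n ∈ Finset.Icc 1 ⌊x⌋₊, a n / (n : ℂ) * ((⌊x / (n : ℝ)⌋ : ℤ) : ℂ)‖ :=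
            norm_add_le _ _
        _ ≤ ‖2 * α‖ * K + ∑ n ∈ Finset.Icc 1 ⌊K⌋₊, ‖a n‖ / n * K := by
            gcongr ?_ + ?_
            · rw [norm_mul, norm_neg, Complex.norm_real, Real.norm_eq_abs,
                abs_of_nonneg hx0]
              exact mul_le_mul_of_nonneg_left hxK (norm_nonneg _)
            · calc ‖∑ n ∈ Finset.Icc 1 ⌊x⌋₊, a n / (n : ℂ) * ((⌊x / (n : ℝ)⌋ : ℤ) : ℂ)‖
                  ≤ ∑ n ∈ Finset.Icc 1 ⌊x⌋₊, ‖a n / (n : ℂ) * ((⌊x / (n : ℝ)⌋ : ℤ) : ℂ)‖ :=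
                    norm_sum_le _ _
                _ ≤ ∑ n ∈ Finset.Icc 1 ⌊x⌋₊, ‖a n‖ / n * K := by
                    apply Finset.sum_le_sum
                    intro n hn
                    have hn1 : (1:ℕ) ≤ n := (Finset.mem_Icc.mp hn).1
                    have hnp : (0:ℝ) < n := by exact_mod_cast (by omega : 0 < n)
                    rw [norm_mul, norm_div, Complex.norm_natCast, Complex.norm_intCast,
                      abs_of_nonneg (by positivity : (0:ℝ) ≤ ((⌊x / (n:ℝ)⌋ : ℤ) : ℝ))]
                    refine mul_le_mul_of_nonneg_left ?_ (by positivity)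
                    calc ((⌊x / (n:ℝ)⌋ : ℤ) : ℝ) ≤ x / n := Int.floor_le _
                      _ ≤ x / 1 := by gcongr; exact_mod_cast hn1
                      _ = x := div_one x
                      _ ≤ K := hxK
                _ ≤ ∑ n ∈ Finset.Icc 1 ⌊K⌋₊, ‖a n‖ / n * K := by
                    apply Finset.sum_le_sum_of_subset_of_nonneg
                    · exact Finset.Icc_subset_Icc_right (Nat.floor_le_floor hxK)
                    · intro n _ _
                      positivity
    · exact ⟨0, fun x hx => absurd (hx.1.trans hx.2) (not_le.mpr hK)⟩
end

section
/- Let E₁ : [0,∞) → ℂ be a function satisfying ∫₀ˣ |E₁(t)|/t² dt < +∞ for all x ≥ 0. Then the function F₂(x) = E₁(x) + x·∫₀ˣ E₁(t)/t² dt is well-defined on [0,∞), satisfies the Volterra integral equation of second type F₂(x) − ∫₀ˣ F₂(t)/t dt = E₁(x) for all x ≥ 0, and satisfies ∫₀ˣ |F₂(t)|/t dt < +∞ for all x ≥ 0. -/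
/-!
Put `g t = E₁ t / t²` and `G t = ∫₀ᵗ g`. On `(0, x]` we have `F₂ t / t = t g t + G t`, and
Fubini gives `∫₀ˣ G = ∫₀ˣ (x - s) g s`, so `∫₀ˣ F₂ t / t dt = x ∫₀ˣ g = F₂ x - E₁ x`. Integrability
holds because `t` is bounded and `G` is continuous on `[0, x]`.
-/

open Filter MeasureTheory Set

section Primitive

variable {E : Type*} [NormedAddCommGroup E] [NormedSpace ℝ E] {g : ℝ → E} {a b : ℝ}

theorem MeasureTheory.IntegrableOn.continuousOn_smul_Ioc (hg : IntegrableOn g (Ioc a b))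
    {f : ℝ → ℝ} (hf : ContinuousOn f (Icc a b)) : IntegrableOn (fun t => f t • g t) (Ioc a b) := by
  rw [← integrableOn_Icc_iff_integrableOn_Ioc] at hg ⊢
  exact hg.continuousOn_smul hf isCompact_Icc

theorem integrableOn_Ioc_primitive (hg : IntegrableOn g (Ioc a b)) :
    IntegrableOn (fun t => ∫ s in Ioc a t, g s) (Ioc a b) :=
  (intervalIntegral.continuousOn_primitive (by rwa [integrableOn_Icc_iff_integrableOn_Ioc])
    |>.integrableOn_Icc).mono_set Ioc_subset_Icc_self

variable [CompleteSpace E]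

theorem integral_Ioc_primitive (hg : IntegrableOn g (Ioc a b)) :
    ∫ t in Ioc a b, ∫ s in Ioc a t, g s = ∫ s in Ioc a b, (b - s) • g s := by
  set μ := volume.restrict (Ioc a b)
  have : IsFiniteMeasure μ := isFiniteMeasure_restrict.2 measure_Ioc_lt_top.ne
  have hS : MeasurableSet {p : ℝ × ℝ | a < p.2 ∧ p.2 ≤ p.1} :=
    (measurableSet_lt measurable_const measurable_snd).inter
      (measurableSet_le measurable_snd measurable_fst)
  have hprod : Integrable (Function.uncurry fun t s => (Ioc a t).indicator g s) (μ.prod μ) :=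
    (hg.comp_snd μ).indicator hS
  calc ∫ t in Ioc a b, ∫ s in Ioc a t, g s
      = ∫ t, ∫ s, (Ioc a t).indicator g s ∂μ ∂μ := by
        refine setIntegral_congr_fun measurableSet_Ioc fun t ht => ?_
        rw [integral_indicator measurableSet_Ioc, Measure.restrict_restrict measurableSet_Ioc,
          inter_eq_left.2 (Ioc_subset_Ioc_right ht.2)]
    _ = ∫ s, ∫ t, (Ioc a t).indicator g s ∂μ ∂μ := integral_integral_swap hprod
    _ = ∫ s in Ioc a b, (b - s) • g s := by
        refine setIntegral_congr_fun measurableSet_Ioc fun s hs => ?_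
        have hslice : (fun t => (Ioc a t).indicator g s) = (Ici s).indicator fun _ => g s := by
          ext t
          by_cases hst : s ≤ t <;> simp [hst, hs.1]
        have hIcc : Ici s ∩ Ioc a b = Icc s b := by
          ext t
          simp only [mem_inter_iff, mem_Ici, mem_Ioc, mem_Icc]
          exact ⟨fun h => ⟨h.1, h.2.2⟩, fun h => ⟨h.1, hs.1.trans_le h.1, h.2⟩⟩
        rw [hslice, integral_indicator_const _ measurableSet_Ici, measureReal_restrict_apply
          measurableSet_Ici, hIcc, Real.volume_real_Icc_of_le hs.2]

/-- Integrated form of `(t G t)' = t g t + G t` for the primitive `G` of `g` vanishing at `a`. -/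
theorem integral_Ioc_smul_add_primitive (hg : IntegrableOn g (Ioc a b)) :
    ∫ t in Ioc a b, (t • g t + ∫ s in Ioc a t, g s) = b • ∫ t in Ioc a b, g t := by
  have hid : IntegrableOn (fun t => t • g t) (Ioc a b) :=
    hg.continuousOn_smul_Ioc continuousOn_id
  rw [integral_add hid (integrableOn_Ioc_primitive hg), integral_Ioc_primitive hg,
    ← integral_add hid (hg.continuousOn_smul_Ioc (by fun_prop)), ← integral_smul]
  simp_rw [← add_smul, add_sub_cancel]

end Primitive

/-- Let `E₁ : [0,∞) → ℂ` satisfy `∫₀ˣ |E₁(t)|/t² dt < +∞` for all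
`x ≥ 0` (i.e. `t ↦ E₁(t)/t²` is Lebesgue integrable on `(0,x]`). Then the function
`F₂(x) = E₁(x) + x·∫₀ˣ E₁(t)/t² dt` is well-defined on `[0,∞)`, satisfies the
Volterra integral equation of second type `F₂(x) − ∫₀ˣ F₂(t)/t dt = E₁(x)` for all
`x ≥ 0`, and satisfies `∫₀ˣ |F₂(t)|/t dt < +∞` for all `x ≥ 0`. -/
theorem stmt_9
    (E₁ : ℝ → ℂ)
    (hE : ∀ x : ℝ, 0 ≤ x →
      IntegrableOn (fun t => E₁ t / (t : ℂ) ^ 2) (Set.Ioc 0 x))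
    (F₂ : ℝ → ℂ)
    (hF₂ : ∀ x : ℝ, 0 ≤ x →
      F₂ x = E₁ x + (x : ℂ) * ∫ t in Set.Ioc (0:ℝ) x, E₁ t / (t : ℂ) ^ 2) :
    ∀ x : ℝ, 0 ≤ x →
      IntegrableOn (fun t => F₂ t / (t : ℂ)) (Set.Ioc 0 x) ∧
      F₂ x - (∫ t in Set.Ioc (0:ℝ) x, F₂ t / (t : ℂ)) = E₁ x := by
  intro x hx
  set g : ℝ → ℂ := fun t => E₁ t / (t : ℂ) ^ 2
  have hg : IntegrableOn g (Ioc 0 x) := hE x hx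
  have hF₂_div :
      EqOn (fun t => F₂ t / t) (fun t => t • g t + ∫ s in Ioc 0 t, g s) (Ioc 0 x) := by
    intro t ht
    have ht0 : (t : ℂ) ≠ 0 := by exact_mod_cast ht.1.ne'
    simp only [hF₂ t ht.1.le, g, Complex.real_smul]
    field_simp
  refine ⟨((hg.continuousOn_smul_Ioc continuousOn_id).add (integrableOn_Ioc_primitive hg))
    |>.congr_fun hF₂_div.symm measurableSet_Ioc, ?_⟩
  rw [setIntegral_congr_fun measurableSet_Ioc hF₂_div, integral_Ioc_smul_add_primitive hg,
    hF₂ x hx, Complex.real_smul]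
  ring
end

section
/- Let E₁ : [0,∞) → ℂ be a function satisfying ∫₀ˣ |E₁(t)|/t² dt < +∞ for all x ≥ 0. Then a function F₃ : [0,∞) → ℂ satisfies ∫₀ˣ |F₃(t)|/t dt < +∞ for all x ≥ 0 and the Volterra integral equation of second type F₃(x) − ∫₀ˣ F₃(t)/t dt = E₁(x) for all x ≥ 0 if and only if there exists a complex number A such that F₃(x) = E₁(x) + x·∫₀ˣ E₁(t)/t² dt + A·x for all x ≥ 0. -/
/-!
Put `G x = ∫₀ˣ F t / t dt`. The equation says `F = E + G`, so on `(0, ∞)` the function `G x / x`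
has derivative `F / x² - G / x² = E / x²`: hence `G x / x - ∫₀ˣ E t / t² dt` is a constant `A`,
which gives `F = E + G` in the stated form. Conversely, for `F` of that form `F t / t` is integrable
and `∫₀ˣ F t / t dt = x ∫₀ˣ E t / t² dt + A x` by integrating by parts.

Both integrations by parts are instances of Fubini's theorem on the triangle `{s < t}`, which
avoids differentiating the primitive of a merely integrable function.
-/

open MeasureTheory Set

section

variable {V : Type*} [NormedAddCommGroup V] [NormedSpace ℝ V] {f : ℝ → V} {a b c : ℝ}

theorem MeasureTheory.IntegrableOn.integrableOn_primitive (hf : IntegrableOn f (Ioc c b)) :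
    IntegrableOn (fun t => ∫ s in Ioc c t, f s) (Ioc c b) :=
  (intervalIntegral.continuousOn_primitive (hf.congr_set_ae Ioc_ae_eq_Icc.symm)).integrableOn_Icc
    |>.mono_set Ioc_subset_Icc_self

theorem setIntegral_Ioc_add_adjacent (hca : c ≤ a) (hab : a ≤ b) (hf : IntegrableOn f (Ioc c b)) :
    (∫ t in Ioc c a, f t) + ∫ t in Ioc a b, f t = ∫ t in Ioc c b, f t := by
  rw [← Ioc_union_Ioc_eq_Ioc hca hab] at hf ⊢
  exact (setIntegral_union (Ioc_disjoint_Ioc_of_le le_rfl) measurableSet_Ioc hf.left_of_union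
    hf.right_of_union).symm

end

section

variable {w k : ℝ → ℂ} {a b c : ℝ}

theorem setIntegral_Ioc_mul_primitive (hw : IntegrableOn w (Ioc c b))
    (hk : IntegrableOn k (Ioc a b)) :
    ∫ t in Ioc a b, k t * ∫ s in Ioc c t, w s =
      ∫ s in Ioc c b, (∫ t in Ioc (max a s) b, k t) * w s := by
  set F : ℝ × ℝ → ℂ := {q : ℝ × ℝ | q.2 < q.1}.indicator fun q => k q.1 * w q.2
  have hF : Integrable F ((volume.restrict (Ioc a b)).prod (volume.restrict (Ioc c b))) :=
    (hk.mul_prod hw).indicator (measurableSet_lt measurable_snd measurable_fst)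
  have hsection_t : ∀ t ∈ Ioc a b, ∫ s in Ioc c b, F (t, s) = k t * ∫ s in Ioc c t, w s := by
    intro t ht
    have hset : Iio t ∩ Ioc c b = Ioo c t := by
      ext s; simp only [mem_inter_iff, mem_Iio, mem_Ioc, mem_Ioo]; grind
    change ∫ s in Ioc c b, (Iio t).indicator (fun s => k t * w s) s = _
    rw [integral_indicator measurableSet_Iio, Measure.restrict_restrict measurableSet_Iio, hset,
      ← integral_Ioc_eq_integral_Ioo, integral_const_mul]
  have hsection_s : ∀ s ∈ Ioc c b,
      ∫ t in Ioc a b, F (t, s) = (∫ t in Ioc (max a s) b, k t) * w s := by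
    intro s _
    have hset : Ioi s ∩ Ioc a b = Ioc (max a s) b := by
      ext t; simp only [mem_inter_iff, mem_Ioi, mem_Ioc, max_lt_iff]; tauto
    change ∫ t in Ioc a b, (Ioi s).indicator (fun t => k t * w s) t = _
    rw [integral_indicator measurableSet_Ioi, Measure.restrict_restrict measurableSet_Ioi, hset,
      integral_mul_const]
  calc ∫ t in Ioc a b, k t * ∫ s in Ioc c t, w s
      = ∫ t in Ioc a b, ∫ s in Ioc c b, F (t, s) :=
        (setIntegral_congr_fun measurableSet_Ioc hsection_t).symm
    _ = ∫ s in Ioc c b, ∫ t in Ioc a b, F (t, s) := integral_integral_swap hF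
    _ = ∫ s in Ioc c b, (∫ t in Ioc (max a s) b, k t) * w s :=
        setIntegral_congr_fun measurableSet_Ioc hsection_s

theorem setIntegral_Ioc_primitive (hw : IntegrableOn w (Ioc c b)) :
    ∫ t in Ioc c b, ∫ s in Ioc c t, w s = ∫ s in Ioc c b, ((b : ℂ) - s) * w s := by
  have h := setIntegral_Ioc_mul_primitive (a := c) hw
    (integrableOn_const (C := (1 : ℂ)) measure_Ioc_lt_top.ne)
  simp only [one_mul] at h
  rw [h]
  refine setIntegral_congr_fun measurableSet_Ioc fun s hs => ?_
  rw [max_eq_right hs.1.le, setIntegral_const, Real.volume_real_Ioc_of_le hs.2, Complex.real_smul,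
    mul_one, Complex.ofReal_sub]

theorem setIntegral_Ioc_inv_sq (ha : 0 < a) (hab : a ≤ b) :
    ∫ t in Ioc a b, ((t : ℂ) ^ 2)⁻¹ = (a : ℂ)⁻¹ - (b : ℂ)⁻¹ := by
  have hne : ∀ t ∈ uIcc a b, (t : ℂ) ≠ 0 := fun t ht =>
    Complex.ofReal_ne_zero.2 (ha.trans_le (uIcc_of_le hab ▸ ht).1).ne'
  have hderiv : ∀ t ∈ uIcc a b, HasDerivAt (fun t : ℝ => -(t : ℂ)⁻¹) ((t : ℂ) ^ 2)⁻¹ t :=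
    fun t ht => by simpa using (hasDerivAt_inv (hne t ht)).neg.comp_ofReal
  have hcont : ContinuousOn (fun t : ℝ => ((t : ℂ) ^ 2)⁻¹) (uIcc a b) :=
    ContinuousOn.inv₀ (by fun_prop) fun t ht => pow_ne_zero 2 (hne t ht)
  rw [← intervalIntegral.integral_of_le hab,
    intervalIntegral.integral_eq_sub_of_hasDerivAt hderiv hcont.intervalIntegrable]
  ring

theorem setIntegral_Ioc_inv_mul_sub_primitive (ha : 0 < a) (hca : c ≤ a) (hab : a ≤ b)
    (hw : IntegrableOn w (Ioc c b)) :
    ∫ t in Ioc a b, ((t : ℂ)⁻¹ * w t - ((t : ℂ) ^ 2)⁻¹ * ∫ s in Ioc c t, w s) =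
      (b : ℂ)⁻¹ * (∫ s in Ioc c b, w s) - (a : ℂ)⁻¹ * ∫ s in Ioc c a, w s := by
  have hne : ∀ t, a ≤ t → (t : ℂ) ≠ 0 := fun t ht =>
    Complex.ofReal_ne_zero.2 (ha.trans_le ht).ne'
  have hinv : ContinuousOn (fun t : ℝ => (t : ℂ)⁻¹) (Icc a b) :=
    Complex.continuous_ofReal.continuousOn.inv₀ fun t ht => hne t ht.1
  have hinv_sq : ContinuousOn (fun t : ℝ => ((t : ℂ) ^ 2)⁻¹) (Icc a b) :=
    ContinuousOn.inv₀ (by fun_prop) fun t ht => pow_ne_zero 2 (hne t ht.1)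
  have hwab : IntegrableOn w (Ioc a b) := hw.mono_set (Ioc_subset_Ioc_left hca)
  have hinv_w : IntegrableOn (fun t : ℝ => (t : ℂ)⁻¹ * w t) (Ioc a b) :=
    hwab.continuousOn_mul_of_subset hinv isCompact_Icc measurableSet_Ioc Ioc_subset_Icc_self
  have hinv_sq_G : IntegrableOn (fun t : ℝ => ((t : ℂ) ^ 2)⁻¹ * ∫ s in Ioc c t, w s) (Ioc a b) :=
    (hw.integrableOn_primitive.mono_set (Ioc_subset_Ioc_left hca)).continuousOn_mul_of_subset
      hinv_sq isCompact_Icc measurableSet_Ioc Ioc_subset_Icc_self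
  set K : ℝ → ℂ := fun s => ((max a s : ℝ) : ℂ)⁻¹ - (b : ℂ)⁻¹
  have hK : Continuous K :=
    ((Complex.continuous_ofReal.comp (continuous_const.max continuous_id)).inv₀
      fun s => hne _ (le_max_left a s)).sub continuous_const
  have hKw : IntegrableOn (fun s => K s * w s) (Ioc c b) :=
    hw.continuousOn_mul_of_subset hK.continuousOn isCompact_Icc measurableSet_Ioc
      Ioc_subset_Icc_self
  have hswap : ∫ t in Ioc a b, ((t : ℂ) ^ 2)⁻¹ * ∫ s in Ioc c t, w s =
      ∫ s in Ioc c b, K s * w s := by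
    rw [setIntegral_Ioc_mul_primitive hw (hinv_sq.integrableOn_Icc.mono_set Ioc_subset_Icc_self)]
    refine setIntegral_congr_fun measurableSet_Ioc fun s hs => ?_
    rw [setIntegral_Ioc_inv_sq (ha.trans_le (le_max_left a s)) (max_le hab hs.2)]
  have hleft : ∫ s in Ioc c a, K s * w s = ((a : ℂ)⁻¹ - (b : ℂ)⁻¹) * ∫ s in Ioc c a, w s := by
    rw [← integral_const_mul]
    refine setIntegral_congr_fun measurableSet_Ioc fun s hs => ?_
    simp only [K, max_eq_left hs.2]
  have hright : ∫ s in Ioc a b, K s * w s =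
      (∫ s in Ioc a b, (s : ℂ)⁻¹ * w s) - (b : ℂ)⁻¹ * ∫ s in Ioc a b, w s := by
    rw [← integral_const_mul, ← integral_sub hinv_w (hwab.const_mul _)]
    refine setIntegral_congr_fun measurableSet_Ioc fun s hs => ?_
    simp only [K, max_eq_right hs.1.le]
    ring
  rw [integral_sub hinv_w hinv_sq_G, hswap, ← setIntegral_Ioc_add_adjacent hca hab hKw, hleft,
    hright, ← setIntegral_Ioc_add_adjacent hca hab hw]
  ring

end

section

variable {E F : ℝ → ℂ}

theorem exists_eq_of_volterra
    (hF : ∀ x : ℝ, 0 ≤ x → IntegrableOn (fun t => F t / (t : ℂ)) (Ioc 0 x))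
    (hE : ∀ x : ℝ, 0 ≤ x → IntegrableOn (fun t => E t / (t : ℂ) ^ 2) (Ioc 0 x))
    (hvolterra : ∀ x : ℝ, 0 ≤ x → F x - ∫ t in Ioc 0 x, F t / (t : ℂ) = E x) :
    ∃ A : ℂ, ∀ x : ℝ, 0 ≤ x →
      F x = E x + (x : ℂ) * (∫ t in Ioc 0 x, E t / (t : ℂ) ^ 2) + A * (x : ℂ) := by
  set G : ℝ → ℂ := fun x => ∫ t in Ioc 0 x, F t / (t : ℂ)
  set H : ℝ → ℂ := fun x => ∫ t in Ioc 0 x, E t / (t : ℂ) ^ 2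
  have hconst : ∀ a x : ℝ, 0 < a → a ≤ x → (x : ℂ)⁻¹ * G x - H x = (a : ℂ)⁻¹ * G a - H a := by
    intro a x ha hax
    have hFTC := setIntegral_Ioc_inv_mul_sub_primitive ha ha.le hax (hF x (ha.le.trans hax))
    have hintegrand : ∀ t ∈ Ioc a x,
        (t : ℂ)⁻¹ * (F t / t) - ((t : ℂ) ^ 2)⁻¹ * G t = E t / (t : ℂ) ^ 2 := by
      intro t ht
      have ht0 : (t : ℂ) ≠ 0 := Complex.ofReal_ne_zero.2 (ha.trans ht.1).ne'
      rw [← hvolterra t (ha.trans ht.1).le]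
      field_simp
      rfl
    rw [setIntegral_congr_fun measurableSet_Ioc hintegrand] at hFTC
    have hsplit := setIntegral_Ioc_add_adjacent ha.le hax (hE x (ha.le.trans hax))
    simp only [G, H]
    linear_combination hsplit - hFTC
  refine ⟨G 1 - H 1, fun x hx => ?_⟩
  rcases hx.eq_or_lt with rfl | hx
  · simpa using hvolterra 0 le_rfl
  have hx0 : (x : ℂ) ≠ 0 := Complex.ofReal_ne_zero.2 hx.ne'
  have hGx : (x : ℂ)⁻¹ * G x - H x = G 1 - H 1 := by
    rcases le_total x 1 with h | h
    · simpa using (hconst x 1 hx h).symm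
    · simpa using hconst 1 x one_pos h
  have hGx' : G x = x * H x + (G 1 - H 1) * x := by
    rw [← hGx]
    field_simp
    ring
  linear_combination hvolterra x hx.le + hGx'

theorem volterra_of_eq {A : ℂ}
    (hE : ∀ x : ℝ, 0 ≤ x → IntegrableOn (fun t => E t / (t : ℂ) ^ 2) (Ioc 0 x))
    (hFE : ∀ x : ℝ, 0 ≤ x →
      F x = E x + (x : ℂ) * (∫ t in Ioc 0 x, E t / (t : ℂ) ^ 2) + A * (x : ℂ)) :
    (∀ x : ℝ, 0 ≤ x → IntegrableOn (fun t => F t / (t : ℂ)) (Ioc 0 x)) ∧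
      ∀ x : ℝ, 0 ≤ x → F x - ∫ t in Ioc 0 x, F t / (t : ℂ) = E x := by
  set H : ℝ → ℂ := fun x => ∫ t in Ioc 0 x, E t / (t : ℂ) ^ 2
  have hE_div : ∀ x : ℝ, 0 ≤ x → IntegrableOn (fun t => E t / (t : ℂ)) (Ioc 0 x) := by
    intro x hx
    refine ((hE x hx).continuousOn_mul_of_subset Complex.continuous_ofReal.continuousOn
      isCompact_Icc measurableSet_Ioc Ioc_subset_Icc_self).congr_fun (fun t ht => ?_)
      measurableSet_Ioc
    have ht0 : (t : ℂ) ≠ 0 := Complex.ofReal_ne_zero.2 ht.1.ne'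
    field_simp
  have hF_div : ∀ x : ℝ, 0 ≤ x →
      EqOn (fun t => E t / (t : ℂ) + H t + A) (fun t => F t / (t : ℂ)) (Ioc 0 x) := by
    intro x _ t ht
    have ht0 : (t : ℂ) ≠ 0 := Complex.ofReal_ne_zero.2 ht.1.ne'
    simp only [H, hFE t ht.1.le]
    field_simp
  have hint : ∀ x : ℝ, 0 ≤ x → IntegrableOn (fun t => E t / (t : ℂ) + H t) (Ioc 0 x) :=
    fun x hx => (hE_div x hx).add (hE x hx).integrableOn_primitive
  have hint_A : ∀ x : ℝ, IntegrableOn (fun _ => A) (Ioc 0 x) :=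
    fun x => integrableOn_const measure_Ioc_lt_top.ne
  refine ⟨fun x hx => ((hint x hx).add (hint_A x)).congr_fun (hF_div x hx) measurableSet_Ioc,
    fun x hx => ?_⟩
  have hH : ∫ t in Ioc 0 x, H t = x * H x - ∫ t in Ioc 0 x, E t / (t : ℂ) := by
    rw [setIntegral_Ioc_primitive (hE x hx), ← integral_const_mul,
      ← integral_sub ((hE x hx).const_mul _) (hE_div x hx)]
    refine setIntegral_congr_fun measurableSet_Ioc fun t ht => ?_
    have ht0 : (t : ℂ) ≠ 0 := Complex.ofReal_ne_zero.2 ht.1.ne'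
    field_simp
  rw [← setIntegral_congr_fun measurableSet_Ioc (hF_div x hx), integral_add (hint x hx) (hint_A x),
    integral_add (hE_div x hx) (hE x hx).integrableOn_primitive, hH, setIntegral_const,
    Real.volume_real_Ioc_of_le hx, hFE x hx, Complex.real_smul]
  push_cast
  ring

end

/-- Let `E₁ : [0,∞) → ℂ` satisfy `∫₀ˣ |E₁(t)|/t² dt < +∞` for all
`x ≥ 0`. Then a function `F₃ : [0,∞) → ℂ` satisfies `∫₀ˣ |F₃(t)|/t dt < +∞` for all
`x ≥ 0` and the Volterra integral equation `F₃(x) − ∫₀ˣ F₃(t)/t dt = E₁(x)` for all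
`x ≥ 0` if and only if there exists `A ∈ ℂ` with
`F₃(x) = E₁(x) + x·∫₀ˣ E₁(t)/t² dt + A·x` for all `x ≥ 0`. -/
theorem stmt_10
    (E₁ : ℝ → ℂ)
    (hE : ∀ x : ℝ, 0 ≤ x →
      IntegrableOn (fun t => E₁ t / (t : ℂ) ^ 2) (Set.Ioc 0 x))
    (F₃ : ℝ → ℂ) :
    ((∀ x : ℝ, 0 ≤ x → IntegrableOn (fun t => F₃ t / (t : ℂ)) (Set.Ioc 0 x)) ∧
      (∀ x : ℝ, 0 ≤ x →
        F₃ x - (∫ t in Set.Ioc (0:ℝ) x, F₃ t / (t : ℂ)) = E₁ x)) ↔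
    (∃ A : ℂ, ∀ x : ℝ, 0 ≤ x →
      F₃ x = E₁ x + (x : ℂ) * (∫ t in Set.Ioc (0:ℝ) x, E₁ t / (t : ℂ) ^ 2)
        + A * (x : ℂ)) :=
  ⟨fun ⟨hF, hvolterra⟩ => exists_eq_of_volterra hF hE hvolterra,
    fun ⟨_, hFE⟩ => volterra_of_eq hE hFE⟩
end

section
/- For every x ≥ 1, E(x) = x·f(x) + (1/2)·g(x) + 1/2, where E(x) = Σ_{n≤x} φ(n) − (3/π²)·x², f(x) = −Σ_{n=1}^∞ (μ(n)/n)·{x/n}, and g(x) = Σ_{n=1}^∞ μ(n)·{x/n}². -/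
open Filter Set

open ArithmeticFunction
lemma swap_lemma {R : Type*} [AddCommMonoid R] (F : ℕ → ℕ → R) (M : ℕ) :
    ∑ k ∈ Finset.Icc 1 M, ∑ p ∈ k.divisorsAntidiagonal, F p.1 p.2
      = ∑ d ∈ Finset.Icc 1 M, ∑ q ∈ Finset.Icc 1 (M / d), F d q := by
  rw [Finset.sum_sigma', Finset.sum_sigma']
  refine Finset.sum_nbij' (fun p => ⟨p.2.1, p.2.2⟩) (fun p => ⟨p.1 * p.2, (p.1, p.2)⟩)
    ?_ ?_ ?_ ?_ ?_
  · rintro ⟨k, d, q⟩ h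
    simp only [Finset.mem_sigma, Finset.mem_Icc, Nat.mem_divisorsAntidiagonal] at h ⊢
    obtain ⟨⟨hk1, hkM⟩, hdq, hk0⟩ := h
    have hd : 0 < d := by
      rcases Nat.eq_zero_or_pos d with h0 | h0
      · exfalso; subst h0; simp at hdq; omega
      · exact h0
    have hq : 0 < q := by
      rcases Nat.eq_zero_or_pos q with h0 | h0
      · exfalso; subst h0; simp at hdq; omega
      · exact h0
    refine ⟨⟨hd, ?_⟩, hq, ?_⟩
    · calc d ≤ d * q := Nat.le_mul_of_pos_right d hq
        _ = k := hdq
        _ ≤ M := hkM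
    · rw [Nat.le_div_iff_mul_le hd, mul_comm, hdq]; exact hkM
  · rintro ⟨d, q⟩ h
    simp only [Finset.mem_sigma, Finset.mem_Icc, Nat.mem_divisorsAntidiagonal] at h ⊢
    obtain ⟨⟨hd1, hdM⟩, hq1, hqM⟩ := h
    have hdq : d * q ≤ M := by
      rw [Nat.le_div_iff_mul_le (by omega : 0 < d)] at hqM
      have := Nat.mul_comm d q
      omega
    exact ⟨⟨Nat.one_le_iff_ne_zero.mpr (by positivity), hdq⟩, trivial, by positivity⟩
  · rintro ⟨k, d, q⟩ h
    simp only [Finset.mem_sigma, Finset.mem_Icc, Nat.mem_divisorsAntidiagonal] at h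
    obtain ⟨_, hdq, _⟩ := h
    simp only [hdq]
  · rintro ⟨d, q⟩ h; rfl
  · rintro ⟨k, d, q⟩ h; rfl

lemma gauss_sum_real (m : ℕ) :
    ∑ q ∈ Finset.Icc 1 m, (q : ℝ) = ((m : ℝ) ^ 2 + (m : ℝ)) / 2 := by
  induction m with
  | zero => simp
  | succ n ih =>
    rw [Finset.sum_Icc_succ_top (by omega : 1 ≤ n + 1), ih]
    push_cast
    ring

lemma totient_inv (n : ℕ) (hn : 0 < n) :
    (Nat.totient n : ℝ) = ∑ p ∈ n.divisorsAntidiagonal, ((moebius p.1 : ℤ) : ℝ) * p.2 := by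
  have := (ArithmeticFunction.sum_eq_iff_sum_mul_moebius_eq
    (R := ℝ) (f := fun n => (Nat.totient n : ℝ)) (g := fun n => (n : ℝ))).mp ?_ n hn
  · exact this.symm
  · intro m hm
    rw [← Nat.cast_sum]
    exact_mod_cast congrArg (Nat.cast : ℕ → ℝ) (Nat.sum_totient m)

lemma moebius_floor_sum (M : ℕ) (hM : 1 ≤ M) :
    ∑ d ∈ Finset.Icc 1 M, ((moebius d : ℤ) : ℝ) * ((M / d : ℕ) : ℝ) = 1 := by
  have h1 : ∀ d ∈ Finset.Icc 1 M, ((moebius d : ℤ) : ℝ) * ((M / d : ℕ) : ℝ)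
      = ∑ _q ∈ Finset.Icc 1 (M / d), ((moebius d : ℤ) : ℝ) := by
    intro d _
    rw [Finset.sum_const, Nat.card_Icc]
    simp [mul_comm]
  rw [Finset.sum_congr rfl h1, ← swap_lemma (fun d _q => ((moebius d : ℤ) : ℝ)) M]
  have h2 : ∀ k ∈ Finset.Icc 1 M,
      (∑ p ∈ k.divisorsAntidiagonal, ((moebius p.1 : ℤ) : ℝ))
        = if k = 1 then (1 : ℝ) else 0 := by
    intro k hk
    simp only [Finset.mem_Icc] at hk
    have : ∑ p ∈ k.divisorsAntidiagonal, ((moebius p.1 : ℤ) : ℝ)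
        = ∑ d ∈ k.divisors, ((moebius d : ℤ) : ℝ) := by
      rw [← Nat.sum_divisorsAntidiagonal (fun d e => ((moebius d : ℤ) : ℝ))]
    rw [this]
    have hz := congrArg (fun (F : ArithmeticFunction ℤ) => F k)
      ArithmeticFunction.moebius_mul_coe_zeta
    simp only [ArithmeticFunction.coe_mul_zeta_apply, ArithmeticFunction.one_apply] at hz
    rw [← Int.cast_sum, hz]
    split <;> simp
  rw [Finset.sum_congr rfl h2, Finset.sum_ite_eq' (Finset.Icc 1 M) 1 (fun _ => (1:ℝ))]
  simp [hM]

lemma totient_sum_eq (M : ℕ) :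
    ∑ k ∈ Finset.Icc 1 M, (Nat.totient k : ℝ)
      = ∑ d ∈ Finset.Icc 1 M, ((moebius d : ℤ) : ℝ)
          * (((M / d : ℕ) : ℝ) ^ 2 + ((M / d : ℕ) : ℝ)) / 2 := by
  have h1 : ∀ k ∈ Finset.Icc 1 M, (Nat.totient k : ℝ)
      = ∑ p ∈ k.divisorsAntidiagonal, ((moebius p.1 : ℤ) : ℝ) * p.2 := by
    intro k hk
    simp only [Finset.mem_Icc] at hk
    exact totient_inv k (by omega)
  rw [Finset.sum_congr rfl h1, swap_lemma (fun d q => ((moebius d : ℤ) : ℝ) * q) M]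
  refine Finset.sum_congr rfl fun d _ => ?_
  rw [← Finset.mul_sum]
  have : ∑ q ∈ Finset.Icc 1 (M / d), (q : ℝ) = (((M / d : ℕ) : ℝ) ^ 2 + ((M / d : ℕ) : ℝ)) / 2 :=
    gauss_sum_real (M / d)
  rw [this]; ring

lemma key_sum (M : ℕ) (hM : 1 ≤ M) :
    ∑ n ∈ Finset.Icc 1 M, ((moebius n : ℤ) : ℝ) * ((M / n : ℕ) : ℝ) ^ 2
      = 2 * (∑ k ∈ Finset.Icc 1 M, (Nat.totient k : ℝ)) - 1 := by
  have h1 := totient_sum_eq M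
  have h2 := moebius_floor_sum M hM
  have h3 : ∑ n ∈ Finset.Icc 1 M, ((moebius n : ℤ) : ℝ) * ((M / n : ℕ) : ℝ) ^ 2
      = ∑ n ∈ Finset.Icc 1 M, (2 * (((moebius n : ℤ) : ℝ)
          * (((M / n : ℕ) : ℝ) ^ 2 + ((M / n : ℕ) : ℝ)) / 2)
        - ((moebius n : ℤ) : ℝ) * ((M / n : ℕ) : ℝ)) := by
    refine Finset.sum_congr rfl fun n _ => by ring
  rw [h3, Finset.sum_sub_distrib, ← Finset.mul_sum, ← h1, h2]

lemma moebius_summable : Summable (fun n : ℕ => ((moebius n : ℤ) : ℝ) / (n : ℝ) ^ 2) := by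
  refine Summable.of_abs (Summable.of_nonneg_of_le (fun n => abs_nonneg _) (fun n => ?_)
    ((Real.summable_one_div_nat_pow (p := 2)).mpr one_lt_two))
  rcases Nat.eq_zero_or_pos n with rfl | hn
  · simp
  · rw [abs_div, abs_of_nonneg (by positivity : (0:ℝ) ≤ (n:ℝ)^2), div_le_div_iff_of_pos_right
      (by positivity)]
    · calc |((moebius n : ℤ) : ℝ)| = ((|moebius n| : ℤ) : ℝ) := by push_cast; ring
        _ ≤ 1 := by exact_mod_cast ArithmeticFunction.abs_moebius_le_one

lemma moebius_tsum : ∑' n : ℕ, ((moebius n : ℤ) : ℝ) / (n : ℝ) ^ 2 = 6 / Real.pi ^ 2 := by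
  have h2 : (1 : ℝ) < (2 : ℂ).re := by norm_num
  have hzeta := ArithmeticFunction.LSeries_zeta_eq_riemannZeta h2
  have hmul := ArithmeticFunction.LSeries_zeta_mul_Lseries_moebius h2
  rw [hzeta, riemannZeta_two] at hmul
  have hpi : (Real.pi : ℂ) ^ 2 / 6 ≠ 0 := by
    simp [Real.pi_ne_zero]
  have hpi2 : ((Real.pi : ℂ)) ^ 2 ≠ 0 :=
    pow_ne_zero 2 (Complex.ofReal_ne_zero.mpr Real.pi_ne_zero)
  have hL : LSeries (fun n => ((moebius n : ℤ) : ℂ)) 2 = 6 / (Real.pi : ℂ) ^ 2 := by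
    rw [eq_div_iff hpi2]
    linear_combination 6 * hmul
  have hterm : ∀ n : ℕ, LSeries.term (fun n => ((moebius n : ℤ) : ℂ)) 2 n
      = ((((moebius n : ℤ) : ℝ) / (n : ℝ) ^ 2 : ℝ) : ℂ) := by
    intro n
    rcases Nat.eq_zero_or_pos n with rfl | hn
    · simp [LSeries.term]
    · rw [LSeries.term_of_ne_zero (by omega)]
      rw [show ((2 : ℂ)) = ((2 : ℕ) : ℂ) by norm_num, Complex.cpow_natCast]
      push_cast
      ring
  apply Complex.ofReal_injective
  rw [Complex.ofReal_tsum]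
  calc ∑' n : ℕ, ((((moebius n : ℤ) : ℝ) / (n : ℝ) ^ 2 : ℝ) : ℂ)
      = LSeries (fun n => ((moebius n : ℤ) : ℂ)) 2 := by
        rw [LSeries]; exact tsum_congr fun n => (hterm n).symm
    _ = 6 / (Real.pi : ℂ) ^ 2 := hL
    _ = (((6 / Real.pi ^ 2 : ℝ)) : ℂ) := by push_cast; ring

lemma moebius_tendsto :
    Tendsto (fun N : ℕ => ∑ n ∈ Finset.Icc 1 N, ((moebius n : ℤ) : ℝ) / (n : ℝ) ^ 2)
      atTop (nhds (6 / Real.pi ^ 2)) := by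
  have h := moebius_summable.hasSum.tendsto_sum_nat
  rw [moebius_tsum] at h
  have h2 := h.comp (tendsto_add_atTop_nat 1)
  refine h2.congr fun N => ?_
  have hr : Finset.range (N + 1) = insert 0 (Finset.Icc 1 N) := by
    ext a
    simp only [Finset.mem_range, Finset.mem_insert, Finset.mem_Icc]
    omega
  show ∑ n ∈ Finset.range (N + 1), ((moebius n : ℤ) : ℝ) / (n : ℝ) ^ 2 = _
  rw [hr, Finset.sum_insert (by simp)]
  norm_num


/-- For every `x ≥ 1`, `E(x) = x·f(x) + (1/2)·g(x) + 1/2`, where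
`E(x) = Σ_{n≤x} φ(n) − (3/π²)·x²`, `f(x) = −Σ_{n=1}^∞ (μ(n)/n)·{x/n}` and
`g(x) = Σ_{n=1}^∞ μ(n)·{x/n}²`. -/
theorem stmt_12
    (E : ℝ → ℝ)
    (hE : ∀ x : ℝ, 0 ≤ x →
      E x = (∑ n ∈ Finset.Icc 1 ⌊x⌋₊, (Nat.totient n : ℝ))
        - 3 / Real.pi ^ 2 * x ^ 2)
    (f : ℝ → ℝ)
    (hf : ∀ x : ℝ, 0 ≤ x →
      Tendsto (fun N : ℕ => -∑ n ∈ Finset.Icc 1 N,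
          ((ArithmeticFunction.moebius n : ℤ) : ℝ) / (n : ℝ) * Int.fract (x / (n : ℝ)))
        atTop (nhds (f x)))
    (g : ℝ → ℝ)
    (hg : ∀ x : ℝ, 0 ≤ x →
      Tendsto (fun N : ℕ => ∑ n ∈ Finset.Icc 1 N,
          ((ArithmeticFunction.moebius n : ℤ) : ℝ) * Int.fract (x / (n : ℝ)) ^ 2)
        atTop (nhds (g x))) :
    ∀ x : ℝ, 1 ≤ x → E x = x * f x + (1 / 2) * g x + 1 / 2 := by
  intro x hx
  have hx0 : (0 : ℝ) ≤ x := le_trans zero_le_one hx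
  set M : ℕ := ⌊x⌋₊ with hMdef
  have hM1 : 1 ≤ M := Nat.le_floor (by exact_mod_cast hx)
  set T : ℝ := ∑ k ∈ Finset.Icc 1 M, (Nat.totient k : ℝ) with hT
  -- the key finite identity
  have hstep : ∀ N : ℕ, M ≤ N →
      x * (-∑ n ∈ Finset.Icc 1 N,
            ((moebius n : ℤ) : ℝ) / (n : ℝ) * Int.fract (x / (n : ℝ)))
        + (1 / 2) * ∑ n ∈ Finset.Icc 1 N,
            ((moebius n : ℤ) : ℝ) * Int.fract (x / (n : ℝ)) ^ 2
      = T - 1 / 2 - x ^ 2 / 2 * ∑ n ∈ Finset.Icc 1 N, ((moebius n : ℤ) : ℝ) / (n : ℝ) ^ 2 := by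
    intro N hN
    have hfr : ∀ n : ℕ, 1 ≤ n → Int.fract (x / n) = x / n - ((M / n : ℕ) : ℝ) := by
      intro n hn
      rw [Int.fract]
      congr 1
      rw [← natCast_floor_eq_intCast_floor (by positivity), hMdef, Nat.floor_div_natCast]
    have e1 : x * (-∑ n ∈ Finset.Icc 1 N,
            ((moebius n : ℤ) : ℝ) / (n : ℝ) * Int.fract (x / (n : ℝ)))
        + (1 / 2) * ∑ n ∈ Finset.Icc 1 N,
            ((moebius n : ℤ) : ℝ) * Int.fract (x / (n : ℝ)) ^ 2
      = ∑ n ∈ Finset.Icc 1 N,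
          ((1 / 2) * (((moebius n : ℤ) : ℝ) * Int.fract (x / (n : ℝ)) ^ 2)
            - x * (((moebius n : ℤ) : ℝ) / (n : ℝ) * Int.fract (x / (n : ℝ)))) := by
      rw [Finset.sum_sub_distrib, ← Finset.mul_sum, ← Finset.mul_sum]
      ring
    rw [e1]
    have e2 : ∀ n ∈ Finset.Icc 1 N,
        (1 / 2) * (((moebius n : ℤ) : ℝ) * Int.fract (x / (n : ℝ)) ^ 2)
            - x * (((moebius n : ℤ) : ℝ) / (n : ℝ) * Int.fract (x / (n : ℝ)))
        = ((moebius n : ℤ) : ℝ) * ((M / n : ℕ) : ℝ) ^ 2 / 2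
            - x ^ 2 / 2 * (((moebius n : ℤ) : ℝ) / (n : ℝ) ^ 2) := by
      intro n hn
      simp only [Finset.mem_Icc] at hn
      have hn0 : (n : ℝ) ≠ 0 := by
        have : 0 < n := by omega
        positivity
      rw [hfr n hn.1]
      field_simp
      ring
    rw [Finset.sum_congr rfl e2, Finset.sum_sub_distrib, ← Finset.mul_sum]
    have e3 : ∑ n ∈ Finset.Icc 1 N, ((moebius n : ℤ) : ℝ) * ((M / n : ℕ) : ℝ) ^ 2 / 2
        = ∑ n ∈ Finset.Icc 1 M, ((moebius n : ℤ) : ℝ) * ((M / n : ℕ) : ℝ) ^ 2 / 2 := by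
      rw [Finset.sum_subset (Finset.Icc_subset_Icc_right hN)]
      intro n hn hnot
      simp only [Finset.mem_Icc] at hn hnot
      have : M / n = 0 := Nat.div_eq_of_lt (by omega)
      rw [this]
      norm_num
    rw [e3]
    have e4 : ∑ n ∈ Finset.Icc 1 M, ((moebius n : ℤ) : ℝ) * ((M / n : ℕ) : ℝ) ^ 2 / 2
        = T - 1 / 2 := by
      have := key_sum M hM1
      rw [← Finset.sum_div, this, hT]
      ring
    rw [e4]
  -- limits
  have hlim1 : Tendsto (fun N : ℕ =>
      x * (-∑ n ∈ Finset.Icc 1 N,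
            ((moebius n : ℤ) : ℝ) / (n : ℝ) * Int.fract (x / (n : ℝ)))
        + (1 / 2) * ∑ n ∈ Finset.Icc 1 N,
            ((moebius n : ℤ) : ℝ) * Int.fract (x / (n : ℝ)) ^ 2)
      atTop (nhds (x * f x + (1 / 2) * g x)) :=
    ((hf x hx0).const_mul x).add ((hg x hx0).const_mul (1 / 2))
  have hlim2 : Tendsto (fun N : ℕ =>
      T - 1 / 2 - x ^ 2 / 2 * ∑ n ∈ Finset.Icc 1 N, ((moebius n : ℤ) : ℝ) / (n : ℝ) ^ 2)
      atTop (nhds (T - 1 / 2 - x ^ 2 / 2 * (6 / Real.pi ^ 2))) :=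
    tendsto_const_nhds.sub (moebius_tendsto.const_mul (x ^ 2 / 2))
  have hlim1' : Tendsto (fun N : ℕ =>
      T - 1 / 2 - x ^ 2 / 2 * ∑ n ∈ Finset.Icc 1 N, ((moebius n : ℤ) : ℝ) / (n : ℝ) ^ 2)
      atTop (nhds (x * f x + (1 / 2) * g x)) := by
    refine hlim1.congr' ?_
    filter_upwards [eventually_ge_atTop M] with N hN
    exact hstep N hN
  have hkey : x * f x + (1 / 2) * g x = T - 1 / 2 - x ^ 2 / 2 * (6 / Real.pi ^ 2) :=
    tendsto_nhds_unique hlim1' hlim2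
  rw [hE x hx0, ← hMdef, ← hT, hkey]
  ring
end
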